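/- arXiv:0709.3044 — 5 statements merged into one kernel-verified Lean document; each statement's English description precedes it below -/
import Mathlib

section
/- Let n, k be positive integers (k ≥ 2) and β, α_0, ..., α_{n-1} non-negative integers with 0 ≤ β ≤ k−1. Then det_{0≤i,j≤n-1}(C_{(k−1)α_i + j + β, k}) = ∏_{0≤i<j≤n-1}(α_j − α_i) · ∏_{i=0}^{n-1} (((k−1)i+β+n)! · (kα_i+β)!) / ((ki+β)! · α_i! · ((k−1)α_i+β+n)!), as an identity of rational numbers. -/
/-- The generalised Catalan number `C_{n,k}` of Hilton and Pedersen. -/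
def genCatalan (n k : ℕ) : ℚ :=
  ((n - (k - 1) * (n / (k - 1)) + 1 : ℕ) : ℚ) / ((n + n / (k - 1) + 1 : ℕ) : ℚ) *
    (Nat.choose (n + n / (k - 1) + 1) (n + 1) : ℚ)

namespace GenCatAux


open Finset

lemma fact_add (m d : ℕ) :
    (m + d).factorial = m.factorial * ∏ w ∈ Finset.range d, (m + 1 + w) := by
  induction d with
  | zero => simp
  | succ d ih =>
    rw [Finset.prod_range_succ, ← mul_assoc, ← ih]
    have : m + (d + 1) = (m + d) + 1 := by omega
    rw [this, Nat.factorial_succ]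
    ring

lemma lemA (K β : ℕ) (hK : 1 ≤ K) (hβ : β ≤ K) (a : ℕ) : ∀ j : ℕ,
    ((K+1)*a + β + j + (j+β)/K).factorial * a.factorial
      = ((K+1)*a+β).factorial * (K+1)^((j+β)/K) * (a + (j+β)/K).factorial *
        ∏ l ∈ Finset.range j, ((K+1)*a + β + (l+1+(l+β)/K)) := by
  intro j
  induction j with
  | zero =>
    rcases Nat.lt_or_ge β K with h | h
    · rw [Nat.div_eq_of_lt (by omega : 0 + β < K)]
      simp
    · have hβK : K = β := le_antisymm h hβ
      subst hβK
      have h1 : (0 + K) / K = 1 := by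
        have : (0 + K) = K := by omega
        rw [this, Nat.div_self (by omega)]
      rw [h1]
      have h2 : (K+1)*a + K + 0 + 1 = ((K+1)*a + K) + 1 := by omega
      rw [h2, Nat.factorial_succ]
      have h3 : (K+1)*a + K + 1 = (K+1)*(a+1) := by ring
      rw [h3]
      simp [Nat.factorial_succ]
      ring
  | succ j ih =>
    have hsd : (j + 1 + β) / K = (j + β) / K + if K ∣ j + β + 1 then 1 else 0 := by
      have : j + 1 + β = (j + β) + 1 := by omega
      rw [this, Nat.succ_div]
    by_cases hd : K ∣ j + β + 1
    · -- t jumps by one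
      rw [hsd, if_pos hd]
      set t := (j + β) / K with ht
      have htt : (j+β+1)/K = t + 1 := by
        have h' : (j+β+1)/K = (j+1+β)/K := by congr 1; omega
        rw [h', hsd, if_pos hd]
      have hKt1 : K * (t+1) = j + β + 1 := by
        rw [← htt]; exact Nat.mul_div_cancel' hd
      have e1 : (K+1)*a + β + (j+1) + (t+1) = (((K+1)*a + β + j + t) + 1) + 1 := by omega
      set X := (K+1)*a + β + j + t with hX
      have expand : (K+1)*(a+(t+1)) = (K+1)*a + K*(t+1) + (t+1) := by ring
      have e2 : X + 1 + 1 = (K+1)*(a+(t+1)) := by omega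
      have e3 : X + 1 = (K+1)*a + β + (j+1+(j+β)/K) := by rw [hX, ← ht]; omega
      rw [Finset.prod_range_succ, e1, Nat.factorial_succ, Nat.factorial_succ]
      calc (X+1+1) * ((X+1) * X.factorial) * a.factorial
          = ((K+1)*(a+(t+1))) * ((K+1)*a + β + (j+1+(j+β)/K)) * (X.factorial * a.factorial) := by
            rw [← e2, ← e3]; ring
        _ = ((K+1)*(a+(t+1))) * ((K+1)*a + β + (j+1+(j+β)/K)) *
              (((K+1)*a+β).factorial * (K+1)^t * (a + t).factorial *
                ∏ l ∈ Finset.range j, ((K+1)*a + β + (l+1+(l+β)/K))) := by rw [ih]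
        _ = ((K+1)*a+β).factorial * (K+1)^(t+1) * ((a + (t+1)) * (a+t).factorial) *
              ((∏ l ∈ Finset.range j, ((K+1)*a + β + (l+1+(l+β)/K))) *
                ((K+1)*a + β + (j+1+(j+β)/K))) := by
            rw [pow_succ]; ring
        _ = ((K+1)*a+β).factorial * (K+1)^(t+1) * (a + (t+1)).factorial *
              ((∏ l ∈ Finset.range j, ((K+1)*a + β + (l+1+(l+β)/K))) *
                ((K+1)*a + β + (j+1+(j+β)/K))) := by
            have h5 : a + (t+1) = (a+t)+1 := by omega
            rw [h5, Nat.factorial_succ]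
    · -- t stays
      rw [hsd, if_neg hd]
      simp only [add_zero]
      set t := (j + β) / K with ht
      have e1 : (K+1)*a + β + (j+1) + t = ((K+1)*a + β + j + t) + 1 := by omega
      set X := (K+1)*a + β + j + t with hX
      have e3 : X + 1 = (K+1)*a + β + (j+1+(j+β)/K) := by rw [hX, ← ht]; omega
      rw [Finset.prod_range_succ, e1, Nat.factorial_succ]
      calc (X + 1) * X.factorial * a.factorial
          = ((K+1)*a + β + (j+1+(j+β)/K)) * (X.factorial * a.factorial) := by rw [← e3]; ring
        _ = ((K+1)*a + β + (j+1+(j+β)/K)) *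
              (((K+1)*a+β).factorial * (K+1)^t * (a + t).factorial *
                ∏ l ∈ Finset.range j, ((K+1)*a + β + (l+1+(l+β)/K))) := by rw [ih]
        _ = ((K+1)*a+β).factorial * (K+1)^t * (a+t).factorial *
              ((∏ l ∈ Finset.range j, ((K+1)*a + β + (l+1+(l+β)/K))) *
                ((K+1)*a + β + (j+1+(j+β)/K))) := by ring


open Finset

lemma genCat_eq (K m : ℕ) (hK : 1 ≤ K) :
    genCatalan m (K+1)
      = ((m % K + 1 : ℕ) : ℚ) * ((m + m/K).factorial : ℚ)
        / (((m+1).factorial : ℚ) * ((m/K).factorial : ℚ)) := by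
  unfold genCatalan
  have h1 : (K + 1) - 1 = K := by omega
  rw [h1]
  have h2 : m - K * (m / K) = m % K := by
    apply Nat.sub_eq_of_eq_add
    rw [Nat.add_comm]
    exact (Nat.div_add_mod m K).symm
  rw [h2]
  have h3 : m + 1 ≤ m + m / K + 1 :=
    Nat.add_le_add_right (Nat.le_add_right m (m/K)) 1
  rw [Nat.cast_choose ℚ h3]
  have h4 : m + m / K + 1 - (m + 1) = m / K := by
    rw [Nat.add_right_comm]
    exact Nat.add_sub_cancel_left (m+1) (m/K)
  rw [h4]
  have h5 : (m + m/K + 1).factorial = (m + m/K + 1) * (m + m/K).factorial := rfl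
  rw [h5]
  have hne1 : ((m + m/K + 1 : ℕ) : ℚ) ≠ 0 := by positivity
  have hne2 : (((m+1).factorial : ℕ) : ℚ) ≠ 0 := by
    exact_mod_cast Nat.factorial_ne_zero _
  have hne3 : (((m/K).factorial : ℕ) : ℚ) ≠ 0 := by
    exact_mod_cast Nat.factorial_ne_zero _
  field_simp
  push_cast
  ring

lemma fact_add' (m d : ℕ) :
    (m + d).factorial = m.factorial * ∏ w ∈ Finset.range d, (m + 1 + w) := by
  induction d with
  | zero => simp
  | succ d ih =>
    rw [Finset.prod_range_succ, ← mul_assoc, ← ih]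
    have : m + (d + 1) = (m + d) + 1 := by omega
    rw [this, Nat.factorial_succ]
    ring



lemma alg (S F1 FA FB P FT PL FM PQ FN : ℚ) (h1 : F1 * FA = FB * P * FT * PL)
    (h2 : FN = FM * PQ) (hFA : FA ≠ 0) (hFM : FM ≠ 0) (hFT : FT ≠ 0) (hFN : FN ≠ 0) :
    S * F1 / (FM * FT) = FB / (FA * FN) * S * P * PL * PQ := by
  have hPQ : PQ ≠ 0 := by
    intro h
    rw [h, mul_zero] at h2
    exact hFN h2
  rw [h2] at hFN ⊢
  field_simp
  linear_combination S * h1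

/-- entry factorization -/
lemma lemC (K β n : ℕ) (hK : 1 ≤ K) (hβ : β ≤ K) (a j : ℕ) (hj : j < n) :
    genCatalan (K*a + j + β) (K+1)
      = (((K+1)*a+β).factorial : ℚ) / ((a.factorial : ℚ) * ((K*a+β+n).factorial : ℚ))
        * (((j+β) % K + 1 : ℕ) : ℚ) * ((K+1 : ℕ) : ℚ)^((j+β)/K)
        * (∏ l ∈ Finset.range j, (((K+1)*a + β + (l+1+(l+β)/K) : ℕ) : ℚ))
        * (∏ w ∈ Finset.range (n-1-j), ((K*a + (j+β+2+w) : ℕ) : ℚ)) := by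
  set m := K*a + j + β with hm
  have hdiv : m / K = a + (j+β)/K := by
    rw [hm]
    have : K*a + j + β = (j + β) + K * a := by omega
    rw [this, Nat.add_mul_div_left _ _ (by omega : 0 < K)]
    omega
  have hmod : m % K = (j+β) % K := by
    rw [hm]
    have : K*a + j + β = (j + β) + a * K := by ring
    rw [this, Nat.add_mul_mod_self_right]
  rw [genCat_eq K m hK, hdiv, hmod]
  -- natural-number identity
  have hN1 := lemA K β hK hβ a j
  have hN2 : (K*a+β+n).factorial
      = (K*a + j + β + 1).factorial * ∏ w ∈ Finset.range (n-1-j), (K*a + (j+β+2+w)) := by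
    have h0 : K*a+β+n = (K*a + j + β + 1) + (n-1-j) := by omega
    rw [h0, fact_add']
    congr 1
    apply Finset.prod_congr rfl
    intro w _
    omega
  have hmm : m + (a + (j+β)/K) = (K+1)*a + β + j + (j+β)/K := by rw [hm]; ring
  have hm1 : m + 1 = K*a + j + β + 1 := by rw [hm]
  rw [hmm, hm1]
  -- now pure cast manipulation
  have hq1 : (((K+1)*a + β + j + (j+β)/K).factorial : ℚ) * (a.factorial : ℚ)
      = (((K+1)*a+β).factorial : ℚ) * ((K+1 : ℕ) : ℚ)^((j+β)/K) * ((a + (j+β)/K).factorial : ℚ) *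
        (∏ l ∈ Finset.range j, (((K+1)*a + β + (l+1+(l+β)/K) : ℕ) : ℚ)) := by
    have := congrArg (Nat.cast : ℕ → ℚ) hN1
    simpa only [Nat.cast_mul, Nat.cast_pow, Nat.cast_prod] using this
  have hq2 : ((K*a+β+n).factorial : ℚ)
      = ((K*a + j + β + 1).factorial : ℚ) * (∏ w ∈ Finset.range (n-1-j), ((K*a + (j+β+2+w) : ℕ) : ℚ)) := by
    have := congrArg (Nat.cast : ℕ → ℚ) hN2
    simpa only [Nat.cast_mul, Nat.cast_prod] using this
  have hne : ∀ x : ℕ, ((x.factorial : ℕ) : ℚ) ≠ 0 := fun x => by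
    exact_mod_cast Nat.factorial_ne_zero _
  exact alg _ _ _ _ _ _ _ _ _ _ hq1 hq2 (hne _) (hne _) (hne _) (hne _)


open Finset

/-- The key product identity `S`. -/
lemma lemS (K : ℕ) (hK : 1 ≤ K) :
    ∀ M β n : ℕ, β ≤ K → (K+1)*n + β ≤ M →
    (K+1)^((n+β)/K) * ((n+β)%K + 1) * ∏ i ∈ Finset.range n, ((i+β)%K + 1 + (K+1)*(n-i))
      = ∏ i ∈ Finset.range (n+1), (K*i + β + n + 1) := by
  intro M
  induction M using Nat.strong_induction_on with
  | _ M ih =>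
    intro β n hβ hM
    rcases Nat.lt_or_ge β K with hβK | hβK
    · -- β < K
      rcases n with _ | n'
      · -- n = 0
        rw [Nat.div_eq_of_lt (by omega : 0 + β < K), Nat.mod_eq_of_lt (by omega : 0 + β < K)]
        simp
      · -- n = n' + 1 ; reduce to (β+1, n')
        have hlt : (K+1)*n' + (β+1) < M := by
          have hexp : (K+1)*(n'+1) = (K+1)*n' + (K+1) := by ring
          omega
        have ihS := ih ((K+1)*n' + (β+1)) hlt (β+1) n' (by omega) le_rfl
        -- rewrite t/s shifts in ihS : (n'+(β+1)) = (n'+1+β) etc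
        have hts : (n' + (β+1)) = (n' + 1 + β) := by omega
        rw [hts] at ihS
        have hprod : ∏ i ∈ Finset.range (n'+1), ((i+β)%K + 1 + (K+1)*(n'+1-i))
            = (∏ i ∈ Finset.range n', ((i+(β+1))%K + 1 + (K+1)*(n'-i))) * (β%K + 1 + (K+1)*(n'+1)) := by
          rw [Finset.prod_range_succ']
          congr 1
          · apply Finset.prod_congr rfl
            intro i _
            congr 2
            · congr 1; omega
            · omega
          · simp
        have hβmod : β % K = β := Nat.mod_eq_of_lt hβK
        rw [hprod, hβmod]
        have hrhs : ∏ i ∈ Finset.range (n'+1+1), (K*i + β + (n'+1) + 1)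
            = (∏ i ∈ Finset.range (n'+1), (K*i + (β+1) + n' + 1)) * ((K+1)*(n'+1) + β + 1) := by
          rw [Finset.prod_range_succ]
          congr 1
          · apply Finset.prod_congr rfl
            intro i _
            omega
          · have hexp : (K+1)*(n'+1) = K*(n'+1) + (n'+1) := by ring
            omega
        rw [hrhs, ← ihS]
        ring
    · -- β = K : reduce to β = 0
      have hβK' : K = β := le_antisymm hβK hβ
      subst hβK'
      have hlt : (K+1)*n + 0 < M := by omega
      have ihS := ih ((K+1)*n) hlt 0 n (by omega) le_rfl
      simp only [add_zero] at ihS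
      -- LHS_K = (K+1) * LHS_0
      have ht : (n + K)/K = n/K + 1 := Nat.add_div_right n hK
      have hs : (n + K)%K = n%K := Nat.add_mod_right n K
      have hpc : ∏ i ∈ Finset.range n, ((i+K)%K + 1 + (K+1)*(n-i))
          = ∏ i ∈ Finset.range n, (i%K + 1 + (K+1)*(n-i)) :=
        Finset.prod_congr rfl (fun i _ => by rw [Nat.add_mod_right])
      have hL : (K+1)^((n+K)/K) * ((n+K)%K + 1) * ∏ i ∈ Finset.range n, ((i+K)%K + 1 + (K+1)*(n-i))
          = (K+1) * ((K+1)^(n/K) * (n%K + 1) * ∏ i ∈ Finset.range n, (i%K + 1 + (K+1)*(n-i))) := by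
        rw [ht, hs, hpc, pow_succ]
        ring
      -- RHS relation : RHS_K * (n+1) = RHS_0 * ((K+1)*(n+1))
      have hR : (∏ i ∈ Finset.range (n+1), (K*i + K + n + 1)) * (n + 1)
          = (∏ i ∈ Finset.range (n+1), (K*i + n + 1)) * ((K+1)*(n+1)) := by
        have h1 : ∏ i ∈ Finset.range (n+2), (K*i + n + 1)
            = (∏ i ∈ Finset.range (n+1), (K*(i+1) + n + 1)) * (K*0 + n + 1) := by
          rw [Finset.prod_range_succ']
        have h2 : ∏ i ∈ Finset.range (n+2), (K*i + n + 1)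
            = (∏ i ∈ Finset.range (n+1), (K*i + n + 1)) * (K*(n+1) + n + 1) := by
          rw [Finset.prod_range_succ]
        have h3 : ∏ i ∈ Finset.range (n+1), (K*(i+1) + n + 1)
            = ∏ i ∈ Finset.range (n+1), (K*i + K + n + 1) := by
          apply Finset.prod_congr rfl; intro i _; ring_nf
        have h4 : K*(n+1) + n + 1 = (K+1)*(n+1) := by ring
        calc (∏ i ∈ Finset.range (n+1), (K*i + K + n + 1)) * (n + 1)
            = (∏ i ∈ Finset.range (n+1), (K*(i+1) + n + 1)) * (K*0 + n + 1) := by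
              rw [h3]; simp
          _ = ∏ i ∈ Finset.range (n+2), (K*i + n + 1) := h1.symm
          _ = (∏ i ∈ Finset.range (n+1), (K*i + n + 1)) * ((K+1)*(n+1)) := by rw [h2, h4]
      -- combine
      have key : ((K+1)^((n+K)/K) * ((n+K)%K + 1) * ∏ i ∈ Finset.range n, ((i+K)%K + 1 + (K+1)*(n-i))) * (n+1)
          = (∏ i ∈ Finset.range (n+1), (K*i + K + n + 1)) * (n+1) := by
        rw [hL, ihS, hR]
        ring
      exact Nat.eq_of_mul_eq_mul_right (by omega) key

/-- The star identity. -/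
lemma starN (K β : ℕ) (hK : 1 ≤ K) (hβ : β ≤ K) : ∀ n : ℕ,
    ∏ i ∈ Finset.range n, ((K+1)^((i+β)/K) * ∏ w ∈ Finset.range (n-i), ((i+β)%K + 1 + (K+1)*w))
      = ∏ i ∈ Finset.range n, ∏ w ∈ Finset.range (n-i), ((K+1)*i + β + 1 + w) := by
  intro n
  induction n with
  | zero => simp
  | succ n ih =>
    have hS := lemS K hK ((K+1)*n + β) β n hβ le_rfl
    have hLsplit : ∏ i ∈ Finset.range (n+1), ((K+1)^((i+β)/K) * ∏ w ∈ Finset.range (n+1-i), ((i+β)%K + 1 + (K+1)*w))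
        = (∏ i ∈ Finset.range n, ((K+1)^((i+β)/K) * ∏ w ∈ Finset.range (n-i), ((i+β)%K + 1 + (K+1)*w)))
          * ((K+1)^((n+β)/K) * ((n+β)%K + 1) * ∏ i ∈ Finset.range n, ((i+β)%K + 1 + (K+1)*(n-i))) := by
      rw [Finset.prod_range_succ]
      have hlast : (K+1)^((n+β)/K) * ∏ w ∈ Finset.range (n+1-n), ((n+β)%K + 1 + (K+1)*w)
          = (K+1)^((n+β)/K) * ((n+β)%K + 1) := by
        have : n + 1 - n = 1 := by omega
        rw [this]
        simp
      rw [hlast]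
      have hmid : ∀ i ∈ Finset.range n,
          (K+1)^((i+β)/K) * ∏ w ∈ Finset.range (n+1-i), ((i+β)%K + 1 + (K+1)*w)
          = ((K+1)^((i+β)/K) * ∏ w ∈ Finset.range (n-i), ((i+β)%K + 1 + (K+1)*w)) * ((i+β)%K + 1 + (K+1)*(n-i)) := by
        intro i hi
        have hi' : i < n := Finset.mem_range.mp hi
        have h1 : n + 1 - i = (n-i) + 1 := by omega
        rw [h1, Finset.prod_range_succ]
        ring
      rw [Finset.prod_congr rfl hmid, Finset.prod_mul_distrib]
      ring
    have hRsplit : ∏ i ∈ Finset.range (n+1), ∏ w ∈ Finset.range (n+1-i), ((K+1)*i + β + 1 + w)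
        = (∏ i ∈ Finset.range n, ∏ w ∈ Finset.range (n-i), ((K+1)*i + β + 1 + w))
          * ∏ i ∈ Finset.range (n+1), (K*i + β + n + 1) := by
      rw [Finset.prod_range_succ]
      have hmid : ∀ i ∈ Finset.range n,
          ∏ w ∈ Finset.range (n+1-i), ((K+1)*i + β + 1 + w)
          = (∏ w ∈ Finset.range (n-i), ((K+1)*i + β + 1 + w)) * (K*i + β + n + 1) := by
        intro i hi
        have hi' : i < n := Finset.mem_range.mp hi
        have h1 : n + 1 - i = (n-i) + 1 := by omega
        rw [h1, Finset.prod_range_succ]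
        congr 1
        have hexp : (K+1)*i = K*i + i := by ring
        omega
      rw [Finset.prod_congr rfl hmid, Finset.prod_mul_distrib]
      have hlast : ∏ w ∈ Finset.range (n+1-n), ((K+1)*n + β + 1 + w) = (K*n + β + n + 1) := by
        have : n + 1 - n = 1 := by omega
        rw [this]
        have hexp : (K+1)*n = K*n + n := by ring
        simp
        omega
      rw [hlast, Finset.prod_range_succ]
      ring
    rw [hLsplit, hRsplit, ih, hS]


open Finset Polynomial

/-- Fin double product to range/Ico double product. -/
lemma H2 (n : ℕ) (f : ℕ → ℕ → ℚ) :
    ∏ i : Fin n, ∏ j ∈ Finset.Ioi i, f i.1 j.1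
      = ∏ i ∈ Finset.range n, ∏ j ∈ Finset.Ico (i+1) n, f i j := by
  have inner : ∀ i : Fin n, ∏ j ∈ Finset.Ioi i, f i.1 j.1 = ∏ j ∈ Finset.Ico (i.1+1) n, f i.1 j := by
    intro i
    refine Finset.prod_bij' (fun (j : Fin n) _ => j.1)
      (fun (j : ℕ) (hj : j ∈ Finset.Ico (i.1+1) n) => (⟨j, (Finset.mem_Ico.mp hj).2⟩ : Fin n))
      ?_ ?_ ?_ ?_ ?_ <;>
    first
      | (intro a ha
         have ha' := Finset.mem_Ioi.mp ha
         rw [Fin.lt_def] at ha'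
         simp only [Finset.mem_Ico]
         exact ⟨by omega, a.2⟩)
      | (intro a ha
         have ha' := Finset.mem_Ico.mp ha
         simp only [Finset.mem_Ioi, Fin.lt_def, Fin.val_mk]
         omega)
      | (intro a ha; rfl)
  calc ∏ i : Fin n, ∏ j ∈ Finset.Ioi i, f i.1 j.1
      = ∏ i : Fin n, ∏ j ∈ Finset.Ico (i.1+1) n, f i.1 j := by
        exact Finset.prod_congr rfl (fun i _ => inner i)
    _ = ∏ i ∈ Finset.range n, ∏ j ∈ Finset.Ico (i+1) n, f i j :=
        Fin.prod_univ_eq_prod_range (fun i => ∏ j ∈ Finset.Ico (i+1) n, f i j) n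

/-- pair swap for double products -/
lemma H3 {M : Type*} [CommMonoid M] (n : ℕ) (f : ℕ → ℕ → M) :
    ∏ m ∈ Finset.range n, ∏ l ∈ Finset.range m, f l m
      = ∏ l ∈ Finset.range n, ∏ m ∈ Finset.Ico (l+1) n, f l m := by
  induction n with
  | zero => simp
  | succ n ih =>
    rw [Finset.prod_range_succ, ih, Finset.prod_range_succ]
    have h1 : ∀ l ∈ Finset.range n, ∏ m ∈ Finset.Ico (l+1) (n+1), f l m
        = (∏ m ∈ Finset.Ico (l+1) n, f l m) * f l n := by
      intro l hl
      exact Finset.prod_Ico_succ_top (Nat.succ_le_of_lt (Finset.mem_range.mp hl)) _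
    rw [Finset.prod_congr rfl h1, Finset.prod_mul_distrib]
    simp

/-- the column polynomial -/
noncomputable def qpoly (K β n j : ℕ) : Polynomial ℚ :=
  (∏ l ∈ Finset.range j,
      (Polynomial.C ((K+1 : ℕ) : ℚ) * Polynomial.X + Polynomial.C ((β + (l+1+(l+β)/K) : ℕ) : ℚ))) *
  ∏ w ∈ Finset.range (n-1-j),
      (Polynomial.C ((K : ℕ) : ℚ) * Polynomial.X + Polynomial.C ((j+β+2+w : ℕ) : ℚ))

lemma qpoly_natDegree_lt (K β n j : ℕ) (hj : j < n) : (qpoly K β n j).natDegree < n := by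
  have h1 : (∏ l ∈ Finset.range j,
      (Polynomial.C ((K+1 : ℕ) : ℚ) * Polynomial.X + Polynomial.C ((β + (l+1+(l+β)/K) : ℕ) : ℚ))).natDegree ≤ j := by
    refine le_trans (Polynomial.natDegree_prod_le _ _) ?_
    refine le_trans (Finset.sum_le_card_nsmul _ _ 1 ?_) (by simp)
    intro l _
    exact Polynomial.natDegree_linear_le
  have h2 : (∏ w ∈ Finset.range (n-1-j),
      (Polynomial.C ((K : ℕ) : ℚ) * Polynomial.X + Polynomial.C ((j+β+2+w : ℕ) : ℚ))).natDegree ≤ n-1-j := by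
    refine le_trans (Polynomial.natDegree_prod_le _ _) ?_
    refine le_trans (Finset.sum_le_card_nsmul _ _ 1 ?_) (by simp)
    intro l _
    exact Polynomial.natDegree_linear_le
  have := le_trans (Polynomial.natDegree_mul_le
    (p := ∏ l ∈ Finset.range j,
      (Polynomial.C ((K+1 : ℕ) : ℚ) * Polynomial.X + Polynomial.C ((β + (l+1+(l+β)/K) : ℕ) : ℚ)))
    (q := ∏ w ∈ Finset.range (n-1-j),
      (Polynomial.C ((K : ℕ) : ℚ) * Polynomial.X + Polynomial.C ((j+β+2+w : ℕ) : ℚ)))) (Nat.add_le_add h1 h2)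
  unfold qpoly
  omega

lemma qpoly_eval (K β n j : ℕ) (x : ℚ) :
    (qpoly K β n j).eval x
      = (∏ l ∈ Finset.range j, (((K+1 : ℕ) : ℚ) * x + ((β + (l+1+(l+β)/K) : ℕ) : ℚ)))
        * ∏ w ∈ Finset.range (n-1-j), (((K : ℕ) : ℚ) * x + ((j+β+2+w : ℕ) : ℚ)) := by
  simp [qpoly, Polynomial.eval_prod]

/-- evaluation matrix = vandermonde * coefficient matrix -/
lemma eval_mat_eq (K β n : ℕ) (x : Fin n → ℚ) :
    (Matrix.of fun i j : Fin n => (qpoly K β n j.1).eval (x i))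
      = (Matrix.vandermonde x) *
        (Matrix.of fun l j : Fin n => (qpoly K β n j.1).coeff l.1) := by
  ext i j
  rw [Matrix.mul_apply]
  simp only [Matrix.of_apply, Matrix.vandermonde]
  rw [Polynomial.eval_eq_sum_range' (qpoly_natDegree_lt K β n j.1 j.2) (x i)]
  rw [← Fin.sum_univ_eq_sum_range (fun l => (qpoly K β n j.1).coeff l * (x i)^l) n]
  apply Finset.sum_congr rfl
  intro l _
  ring

lemma det_eval_mat (K β n : ℕ) (x : Fin n → ℚ) :
    (Matrix.of fun i j : Fin n => (qpoly K β n j.1).eval (x i)).det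
      = (∏ i : Fin n, ∏ j ∈ Finset.Ioi i, (x j - x i)) *
        (Matrix.of fun l j : Fin n => (qpoly K β n j.1).coeff l.1).det := by
  rw [eval_mat_eq, Matrix.det_mul, Matrix.det_vandermonde]

lemma v_lt (K β l m : ℕ) (h : l < m) : l+1+(l+β)/K < m+1+(m+β)/K := by
  have := Nat.div_le_div_right (c := K) (by omega : l + β ≤ m + β)
  omega

section Ydef

variable (K β n : ℕ)

noncomputable def yseq : Fin n → ℚ :=
  fun i => -((β + (i.1+1+(i.1+β)/K) : ℕ) : ℚ) / ((K+1 : ℕ) : ℚ)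

lemma eval_y_zero (i j : Fin n) (hij : i < j) :
    (qpoly K β n j.1).eval (yseq K β n i) = 0 := by
  rw [qpoly_eval]
  apply mul_eq_zero_of_left
  apply Finset.prod_eq_zero (Finset.mem_range.mpr (show i.1 < j.1 from hij))
  rw [yseq]
  have hc : ((K+1 : ℕ) : ℚ) ≠ 0 := by positivity
  field_simp
  push_cast
  ring

lemma det_eval_y (hK : 1 ≤ K) :
    (Matrix.of fun i j : Fin n => (qpoly K β n j.1).eval (yseq K β n i)).det
      = ∏ i : Fin n, (qpoly K β n i.1).eval (yseq K β n i) := by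
  have h : (Matrix.of fun i j : Fin n =>
      (qpoly K β n j.1).eval (yseq K β n i)).BlockTriangular OrderDual.toDual := by
    intro i j hij
    exact eval_y_zero K β n i j (by exact hij)
  rw [Matrix.det_of_lowerTriangular _ h]
  rfl

end Ydef

lemma detC (K β n : ℕ) (hK : 1 ≤ K) :
    (Matrix.of fun l j : Fin n => (qpoly K β n j.1).coeff l.1).det
      = ∏ i ∈ Finset.range n, ∏ w ∈ Finset.range (n-1-i),
          (((i+β)%K + 1 + (K+1)*(w+1) : ℕ) : ℚ) := by
  have hc : ((K+1 : ℕ) : ℚ) ≠ 0 := by positivity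
  set y := yseq K β n with hy
  -- each diagonal entry
  have hdiagi : ∀ i : Fin n, (qpoly K β n i.1).eval (y i)
      = (∏ l ∈ Finset.range i.1, (((β + (l+1+(l+β)/K) : ℕ) : ℚ) - ((β + (i.1+1+(i.1+β)/K) : ℕ) : ℚ)))
        * ∏ w ∈ Finset.range (n-1-i.1), ((((i.1+β)%K + 1 + (K+1)*(w+1) : ℕ) : ℚ) / ((K+1 : ℕ) : ℚ)) := by
    intro i
    rw [qpoly_eval]
    congr 1
    · apply Finset.prod_congr rfl
      intro l _
      rw [hy, yseq]
      field_simp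
      push_cast
      ring
    · apply Finset.prod_congr rfl
      intro w _
      rw [hy, yseq]
      have hgnat : (K+1)*(i.1+β+2+w) = K*(β + (i.1+1+(i.1+β)/K)) + ((i.1+β)%K + 1 + (K+1)*(w+1)) := by
        have hdm := Nat.div_add_mod (i.1+β) K
        have hexp1 : (K+1)*(i.1+β+2+w) = K*i.1 + K*β + 2*K + K*w + i.1 + β + 2 + w := by ring
        have hexp2 : K*(β + (i.1+1+(i.1+β)/K)) = K*β + K*i.1 + K + K*((i.1+β)/K) := by ring
        have hexp3 : (K+1)*(w+1) = K*w + K + w + 1 := by ring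
        omega
      have hgq := congrArg (Nat.cast : ℕ → ℚ) hgnat
      push_cast at hgq
      field_simp
      push_cast
      first
        | linear_combination hgq
        | linear_combination -hgq
        | linear_combination (1+(K:ℚ)) * hgq
        | linarith [hgq]
  -- product of diagonal = vandermonde(y) * target
  have hVy : (∏ i : Fin n, ∏ j ∈ Finset.Ioi i, (y j - y i))
      = ∏ i ∈ Finset.range n, ∏ j ∈ Finset.Ico (i+1) n,
          ((((β + (i+1+(i+β)/K) : ℕ) : ℚ) - ((β + (j+1+(j+β)/K) : ℕ) : ℚ)) / ((K+1 : ℕ) : ℚ)) := by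
    rw [← H2 n (fun i j => ((((β + (i+1+(i+β)/K) : ℕ) : ℚ) - ((β + (j+1+(j+β)/K) : ℕ) : ℚ)) / ((K+1 : ℕ) : ℚ)))]
    apply Finset.prod_congr rfl
    intro i _
    apply Finset.prod_congr rfl
    intro j _
    rw [hy, yseq, yseq]
    field_simp
    ring
  have hdiag : (∏ i : Fin n, (qpoly K β n i.1).eval (y i))
      = (∏ i : Fin n, ∏ j ∈ Finset.Ioi i, (y j - y i)) *
        ∏ i ∈ Finset.range n, ∏ w ∈ Finset.range (n-1-i), (((i+β)%K + 1 + (K+1)*(w+1) : ℕ) : ℚ) := by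
    rw [hVy]
    rw [Finset.prod_congr rfl (fun (i : Fin n) _ => hdiagi i)]
    rw [Fin.prod_univ_eq_prod_range (fun i =>
      (∏ l ∈ Finset.range i, (((β + (l+1+(l+β)/K) : ℕ) : ℚ) - ((β + (i+1+(i+β)/K) : ℕ) : ℚ)))
        * ∏ w ∈ Finset.range (n-1-i), ((((i+β)%K + 1 + (K+1)*(w+1) : ℕ) : ℚ) / ((K+1 : ℕ) : ℚ))) n]
    have hL : ∀ i ∈ Finset.range n,
        (∏ l ∈ Finset.range i, (((β + (l+1+(l+β)/K) : ℕ) : ℚ) - ((β + (i+1+(i+β)/K) : ℕ) : ℚ)))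
          * ∏ w ∈ Finset.range (n-1-i), ((((i+β)%K + 1 + (K+1)*(w+1) : ℕ) : ℚ) / ((K+1 : ℕ) : ℚ))
        = (∏ l ∈ Finset.range i, (((β + (l+1+(l+β)/K) : ℕ) : ℚ) - ((β + (i+1+(i+β)/K) : ℕ) : ℚ)))
          * ((∏ w ∈ Finset.range (n-1-i), (((i+β)%K + 1 + (K+1)*(w+1) : ℕ) : ℚ))
             * (((K+1 : ℕ) : ℚ)⁻¹)^(n-1-i)) := by
      intro i _
      rw [Finset.prod_div_distrib, Finset.prod_const, div_eq_mul_inv, inv_pow, Finset.card_range]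
    have hR : ∀ i ∈ Finset.range n,
        ∏ j ∈ Finset.Ico (i+1) n,
          ((((β + (i+1+(i+β)/K) : ℕ) : ℚ) - ((β + (j+1+(j+β)/K) : ℕ) : ℚ)) / ((K+1 : ℕ) : ℚ))
        = (∏ j ∈ Finset.Ico (i+1) n, (((β + (i+1+(i+β)/K) : ℕ) : ℚ) - ((β + (j+1+(j+β)/K) : ℕ) : ℚ)))
          * (((K+1 : ℕ) : ℚ)⁻¹)^(n-1-i) := by
      intro i _
      have hni : n - (i+1) = n - 1 - i := by omega
      rw [Finset.prod_div_distrib, Finset.prod_const, div_eq_mul_inv, inv_pow, Nat.card_Ico, hni]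
    rw [Finset.prod_congr rfl hL, Finset.prod_congr rfl hR]
    rw [Finset.prod_mul_distrib, Finset.prod_mul_distrib, Finset.prod_mul_distrib]
    rw [H3 n (fun l m => (((β + (l+1+(l+β)/K) : ℕ) : ℚ) - ((β + (m+1+(m+β)/K) : ℕ) : ℚ)))]
    ring
  -- nonvanishing of vandermonde at y
  have hVy0 : (∏ i : Fin n, ∏ j ∈ Finset.Ioi i, (y j - y i)) ≠ 0 := by
    rw [Finset.prod_ne_zero_iff]
    intro i _
    rw [Finset.prod_ne_zero_iff]
    intro j hj
    have hij : i < j := Finset.mem_Ioi.mp hj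
    rw [sub_ne_zero]
    intro h0
    rw [hy, yseq, yseq, div_eq_div_iff hc hc] at h0
    have h1 : ((β + (j.1+1+(j.1+β)/K) : ℕ) : ℚ) = ((β + (i.1+1+(i.1+β)/K) : ℕ) : ℚ) := by
      have := mul_right_cancel₀ hc (by linarith [h0] : -((β + (j.1+1+(j.1+β)/K) : ℕ) : ℚ) * ((K+1:ℕ):ℚ) = -((β + (i.1+1+(i.1+β)/K) : ℕ) : ℚ) * ((K+1:ℕ):ℚ))
      linarith [this]
    have h2 : β + (j.1+1+(j.1+β)/K) = β + (i.1+1+(i.1+β)/K) := Nat.cast_injective h1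
    have := v_lt K β i.1 j.1 hij
    omega
  -- combine
  have h1 := det_eval_mat K β n y
  rw [det_eval_y K β n hK, hdiag] at h1
  exact (mul_left_cancel₀ hVy0 h1).symm

end GenCatAux
theorem genCatalan_det (n k : ℕ) (hn : 0 < n) (hk : 2 ≤ k) (β : ℕ) (hβ : β ≤ k - 1)
    (α : ℕ → ℕ) :
    Matrix.det (Matrix.of fun i j : Fin n =>
      genCatalan ((k - 1) * α i.1 + j.1 + β) k) =
    (∏ i ∈ Finset.range n, ∏ j ∈ Finset.Ico (i + 1) n, ((α j : ℚ) - (α i : ℚ))) *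
    ∏ i ∈ Finset.range n,
      ((Nat.factorial ((k - 1) * i + β + n) : ℚ) * (Nat.factorial (k * α i + β) : ℚ)) /
        ((Nat.factorial (k * i + β) : ℚ) * (Nat.factorial (α i) : ℚ) *
          (Nat.factorial ((k - 1) * α i + β + n) : ℚ)) := by
  classical
  obtain ⟨K, rfl⟩ : ∃ K, k = K + 1 := ⟨k - 1, by omega⟩
  have hK : 1 ≤ K := by omega
  have hβK : β ≤ K := by simpa using hβ
  simp only [Nat.add_sub_cancel]
  open GenCatAux in
  -- abbreviations
  set Rr : ℕ → ℚ := fun a => (((K+1)*a+β).factorial : ℚ) / ((a.factorial : ℚ) * ((K*a+β+n).factorial : ℚ)) with hRr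
  set cc : ℕ → ℚ := fun j => (((j+β) % K + 1 : ℕ) : ℚ) * ((K+1 : ℕ) : ℚ)^((j+β)/K) with hcc
  have hmat : (Matrix.of fun i j : Fin n => genCatalan (K * α i.1 + j.1 + β) (K+1))
      = Matrix.of (fun i j : Fin n => Rr (α i.1) *
          ((Matrix.of fun i j : Fin n => cc j.1 *
            ((Matrix.of fun i j : Fin n => (qpoly K β n j.1).eval ((α i.1 : ℕ) : ℚ)) i j)) i j)) := by
    ext i j
    simp only [Matrix.of_apply]
    rw [GenCatAux.lemC K β n hK hβK (α i.1) j.1 j.2, GenCatAux.qpoly_eval]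
    have h1 : ∀ l ∈ Finset.range j.1,
        (((K+1)*(α i.1) + β + (l+1+(l+β)/K) : ℕ) : ℚ)
          = ((K+1:ℕ):ℚ) * ((α i.1 : ℕ):ℚ) + ((β + (l+1+(l+β)/K) : ℕ):ℚ) := by
      intro l _; push_cast; ring
    have h2 : ∀ w ∈ Finset.range (n-1-j.1),
        ((K*(α i.1) + (j.1+β+2+w) : ℕ) : ℚ)
          = ((K:ℕ):ℚ) * ((α i.1 : ℕ):ℚ) + ((j.1+β+2+w : ℕ):ℚ) := by
      intro w _; push_cast; ring
    rw [Finset.prod_congr rfl h1, Finset.prod_congr rfl h2]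
    rw [hRr, hcc]
    ring
  have hd1 : (Matrix.of fun i j : Fin n => Rr (α i.1) *
        ((Matrix.of fun i j : Fin n => cc j.1 *
          ((Matrix.of fun i j : Fin n => (GenCatAux.qpoly K β n j.1).eval ((α i.1 : ℕ) : ℚ)) i j)) i j)).det
      = (∏ i : Fin n, Rr (α i.1)) *
        (Matrix.of fun i j : Fin n => cc j.1 *
          ((Matrix.of fun i j : Fin n => (GenCatAux.qpoly K β n j.1).eval ((α i.1 : ℕ) : ℚ)) i j)).det :=
    Matrix.det_mul_column _ _
  have hd2 : (Matrix.of fun i j : Fin n => cc j.1 *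
          ((Matrix.of fun i j : Fin n => (GenCatAux.qpoly K β n j.1).eval ((α i.1 : ℕ) : ℚ)) i j)).det
      = (∏ j : Fin n, cc j.1) *
        (Matrix.of fun i j : Fin n => (GenCatAux.qpoly K β n j.1).eval ((α i.1 : ℕ) : ℚ)).det :=
    Matrix.det_mul_row _ _
  have hd3 : (Matrix.of fun i j : Fin n => (GenCatAux.qpoly K β n j.1).eval ((α i.1 : ℕ) : ℚ)).det
      = (∏ i : Fin n, ∏ j ∈ Finset.Ioi i, (((α j.1 : ℕ) : ℚ) - ((α i.1 : ℕ) : ℚ))) *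
        (Matrix.of fun l j : Fin n => (GenCatAux.qpoly K β n j.1).coeff l.1).det :=
    GenCatAux.det_eval_mat K β n (fun i => ((α i.1 : ℕ) : ℚ))
  have hp1 : (∏ i : Fin n, Rr (α i.1)) = ∏ i ∈ Finset.range n, Rr (α i) :=
    Fin.prod_univ_eq_prod_range (fun i => Rr (α i)) n
  have hp2 : (∏ j : Fin n, cc j.1) = ∏ j ∈ Finset.range n, cc j :=
    Fin.prod_univ_eq_prod_range (fun j => cc j) n
  have hp3 : (∏ i : Fin n, ∏ j ∈ Finset.Ioi i, (((α j.1 : ℕ) : ℚ) - ((α i.1 : ℕ) : ℚ)))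
      = ∏ i ∈ Finset.range n, ∏ j ∈ Finset.Ico (i+1) n, (((α j : ℕ) : ℚ) - ((α i : ℕ) : ℚ)) :=
    GenCatAux.H2 n (fun i j => ((α j : ℕ) : ℚ) - ((α i : ℕ) : ℚ))
  rw [hmat, hd1, hd2, hd3, GenCatAux.detC K β n hK, hp1, hp2, hp3]
  -- the scalar identity
  have hU : ∀ i ∈ Finset.range n,
      ((K*i+β+n).factorial : ℚ) = (((K+1)*i+β).factorial : ℚ)
        * ∏ w ∈ Finset.range (n-i), (((K+1)*i+β+1+w : ℕ) : ℚ) := by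
    intro i hi
    have hi' : i < n := Finset.mem_range.mp hi
    have hfa : (K*i+β+n).factorial
        = ((K+1)*i+β).factorial * ∏ w ∈ Finset.range (n-i), ((K+1)*i+β+1+w) := by
      have hm : K*i+β+n = ((K+1)*i+β) + (n-i) := by
        have : (K+1)*i = K*i + i := by ring
        omega
      rw [hm, GenCatAux.fact_add']
    have := congrArg (Nat.cast : ℕ → ℚ) hfa
    simpa only [Nat.cast_mul, Nat.cast_prod] using this
  have hT : ∀ i ∈ Finset.range n,
      ((K*i+β+n).factorial : ℚ) * (((K+1)*(α i)+β).factorial : ℚ) /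
        ((((K+1)*i+β).factorial : ℚ) * ((α i).factorial : ℚ) * ((K*(α i)+β+n).factorial : ℚ))
      = Rr (α i) * ∏ w ∈ Finset.range (n-i), (((K+1)*i+β+1+w : ℕ) : ℚ) := by
    intro i hi
    rw [hU i hi, hRr]
    have hne : ∀ x : ℕ, ((x.factorial : ℕ) : ℚ) ≠ 0 := fun x => by
      exact_mod_cast Nat.factorial_ne_zero _
    field_simp
  -- merge cc with the g-product, go to ℕ and use starN
  have hmerge : ∀ i ∈ Finset.range n,
      ((i+β)%K + 1) * (K+1)^((i+β)/K) * ∏ w ∈ Finset.range (n-1-i), ((i+β)%K + 1 + (K+1)*(w+1))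
        = (K+1)^((i+β)/K) * ∏ w ∈ Finset.range (n-i), ((i+β)%K + 1 + (K+1)*w) := by
    intro i hi
    have hi' : i < n := Finset.mem_range.mp hi
    have hni : n - i = (n-1-i)+1 := by omega
    rw [hni, Finset.prod_range_succ']
    simp only [Nat.mul_zero, Nat.add_zero]
    ring
  have hnat : ∏ i ∈ Finset.range n,
        (((i+β)%K + 1) * (K+1)^((i+β)/K) * ∏ w ∈ Finset.range (n-1-i), ((i+β)%K + 1 + (K+1)*(w+1)))
      = ∏ i ∈ Finset.range n, ∏ w ∈ Finset.range (n-i), ((K+1)*i+β+1+w) := by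
    rw [Finset.prod_congr rfl hmerge]
    exact GenCatAux.starN K β hK hβK n
  have hcc2 : (∏ j ∈ Finset.range n, cc j) *
        (∏ i ∈ Finset.range n, ∏ w ∈ Finset.range (n-1-i), (((i+β)%K + 1 + (K+1)*(w+1) : ℕ) : ℚ))
      = ∏ i ∈ Finset.range n, ∏ w ∈ Finset.range (n-i), (((K+1)*i+β+1+w : ℕ) : ℚ) := by
    rw [← Finset.prod_mul_distrib]
    have hci : ∀ i ∈ Finset.range n,
        cc i * ∏ w ∈ Finset.range (n-1-i), (((i+β)%K + 1 + (K+1)*(w+1) : ℕ) : ℚ)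
        = ((((i+β)%K + 1) * (K+1)^((i+β)/K) * ∏ w ∈ Finset.range (n-1-i), ((i+β)%K + 1 + (K+1)*(w+1)) : ℕ) : ℚ) := by
      intro i _
      rw [hcc]
      push_cast
      ring
    have hui : ∀ i ∈ Finset.range n,
        (∏ w ∈ Finset.range (n-i), (((K+1)*i+β+1+w : ℕ) : ℚ))
        = ((∏ w ∈ Finset.range (n-i), ((K+1)*i+β+1+w) : ℕ) : ℚ) := by
      intro i _
      rw [Nat.cast_prod]
    rw [Finset.prod_congr rfl hci, Finset.prod_congr rfl hui, ← Nat.cast_prod, ← Nat.cast_prod]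
    exact congrArg (Nat.cast : ℕ → ℚ) hnat
  rw [Finset.prod_congr rfl hT]
  conv_rhs => rw [Finset.prod_mul_distrib]
  rw [← hcc2]
  ring
end

section
/- Let n, k be positive integers (k ≥ 2) and β a non-negative integer with 0 ≤ β ≤ k−1. Then det_{0≤i,j≤n-1}(C_{(k−1)i + j + β, k}) equals det_{0≤i,j≤n-1}((j+β+1)/(ki+j+β+1) · binom(ki+j+β+1, i)). -/
def bal (k i s : ℕ) : ℚ :=
  ((s + 1 : ℕ) : ℚ) / ((k * i + s + 1 : ℕ) : ℚ) * (Nat.choose (k * i + s + 1) i : ℚ)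

lemma bal_step (k i s : ℕ) (hk : 1 ≤ k) :
    bal k (i+1) (s+1) = bal k (i+1) s + bal k i (s+k) := by
  obtain ⟨N, hNdef⟩ : ∃ N, N = k*i + s + k + 1 := ⟨_, rfl⟩
  have hN1 : k*(i+1) + (s+1) + 1 = N + 1 := by rw [hNdef]; ring
  have hN2 : k*(i+1) + s + 1 = N := by rw [hNdef]; ring
  have hN3 : k*i + (s+k) + 1 = N := by rw [hNdef]; ring
  have hki : i ≤ k * i := Nat.le_mul_of_pos_left i (by omega)
  have hiN : i ≤ N := by omega
  have hpas : Nat.choose (N+1) (i+1) = Nat.choose N i + Nat.choose N (i+1) :=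
    Nat.choose_succ_succ' N i
  have hrelQ : (Nat.choose N (i+1) : ℚ) * (i+1) = (Nat.choose N i : ℚ) * ((N:ℚ) - i) := by
    have h := congrArg (fun x : ℕ => (x : ℚ)) (Nat.choose_succ_right_eq N i)
    push_cast [Nat.cast_sub hiN] at h
    linear_combination h
  have hNQ : (N:ℚ) = k*i + s + k + 1 := by rw [hNdef]; push_cast; ring
  have hN0 : (0:ℚ) < (N:ℚ) := by exact_mod_cast Nat.pos_of_ne_zero (by omega)
  rw [bal, bal, bal, hN1, hN2, hN3, hpas]
  push_cast
  rw [hNQ] at hrelQ ⊢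
  field_simp
  linear_combination (k:ℚ) * hrelQ


lemma bal_base (k i : ℕ) (hk : 1 ≤ k) :
    bal k (i+1) 0 = bal k i (k-1) := by
  obtain ⟨M, hMdef⟩ : ∃ M, M = k*i + k := ⟨_, rfl⟩
  have h1 : k*(i+1) + 0 + 1 = M + 1 := by rw [hMdef]; ring
  have h2 : k*i + (k-1) + 1 = M := by omega
  have h3 : (k-1) + 1 = k := by omega
  have habs : (M+1) * Nat.choose M i = Nat.choose (M+1) (i+1) * (i+1) :=
    Nat.add_one_mul_choose_eq M i
  have habsQ : ((M:ℚ)+1) * (Nat.choose M i : ℚ) = (Nat.choose (M+1) (i+1) : ℚ) * ((i:ℚ)+1) := by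
    exact_mod_cast congrArg (fun x : ℕ => (x : ℚ)) habs
  have hMQ : (M:ℚ) = k*(i+1) := by rw [hMdef]; push_cast; ring
  have hM0 : (0:ℚ) < (M:ℚ) := by
    have : 0 < M := by omega
    exact_mod_cast this
  have hk0 : (0:ℚ) < (k:ℚ) := by exact_mod_cast hk
  rw [bal, bal, h1, h2, h3]
  push_cast
  rw [hMQ] at habsQ ⊢
  field_simp
  linear_combination (-1:ℚ) * habsQ


lemma bal_succ_sum (k i s : ℕ) (hk : 1 ≤ k) :
    bal k (i+1) s = ∑ u ∈ Finset.range (s+1), bal k i (u + (k-1)) := by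
  induction s with
  | zero => simpa using bal_base k i hk
  | succ s ih =>
      rw [Finset.sum_range_succ, ← ih, bal_step k i s hk]
      congr 1
      congr 1
      omega

def coef (k : ℕ) : ℕ → ℕ → ℕ → ℚ
  | 0, s, t => if t = s then 1 else 0
  | (q+1), s, t => ∑ u ∈ Finset.range (s+1), coef k q (u + (k-1)) t

lemma coef_eq_zero_of_gt (k : ℕ) : ∀ q s t, s + q*(k-1) < t → coef k q s t = 0 := by
  intro q
  induction q with
  | zero => intro s t h; simp only [coef]; rw [if_neg]; omega
  | succ q ih =>
      intro s t h
      rw [coef]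
      refine Finset.sum_eq_zero fun u hu => ih _ _ ?_
      simp only [Finset.mem_range] at hu
      have h2 : q*(k-1) + (k-1) = (q+1)*(k-1) := by ring
      omega

lemma coef_diag (k : ℕ) : ∀ q s, coef k q s (s + q*(k-1)) = 1 := by
  intro q
  induction q with
  | zero => intro s; simp [coef]
  | succ q ih =>
      intro s
      rw [coef]
      rw [Finset.sum_eq_single_of_mem s (by simp)]
      · have : s + (q+1)*(k-1) = (s + (k-1)) + q*(k-1) := by ring
        rw [this]; exact ih _
      · intro u hu hne
        simp only [Finset.mem_range] at hu
        refine coef_eq_zero_of_gt k _ _ _ ?_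
        have h2 : q*(k-1) + (k-1) = (q+1)*(k-1) := by ring
        have : u < s := by omega
        omega

lemma coef_eq_zero_of_lt (k : ℕ) : ∀ q s t, 1 ≤ q → t < k-1 → coef k q s t = 0 := by
  intro q
  induction q with
  | zero => omega
  | succ q ih =>
      intro s t _ ht
      rw [coef]
      refine Finset.sum_eq_zero fun u hu => ?_
      match q with
      | 0 => simp only [coef]; rw [if_neg]; omega
      | q+1 => exact ih _ _ (by omega) ht

lemma bal_add_expand (k : ℕ) (hk : 1 ≤ k) : ∀ q i s,
    bal k (i+q) s = ∑ t ∈ Finset.range (s + q*(k-1) + 1), coef k q s t * bal k i t := by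
  intro q
  induction q with
  | zero =>
      intro i s
      simp only [Nat.zero_mul, Nat.add_zero, coef]
      rw [Finset.sum_eq_single_of_mem s (by simp [Nat.lt_succ_self])]
      · simp
      · intro t _ hne; simp [hne]
  | succ q ih =>
      intro i s
      have h1 : i + (q+1) = (i + q) + 1 := by ring
      rw [h1, bal_succ_sum k (i+q) s hk]
      have h2 : ∀ u ∈ Finset.range (s+1), bal k (i+q) (u + (k-1))
          = ∑ t ∈ Finset.range (s + (q+1)*(k-1) + 1), coef k q (u+(k-1)) t * bal k i t := by
        intro u hu
        simp only [Finset.mem_range] at hu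
        rw [ih i (u + (k-1))]
        have hle : u + (k-1) + q*(k-1) + 1 ≤ s + (q+1)*(k-1) + 1 := by
          have h3 : (q+1)*(k-1) = q*(k-1) + (k-1) := by ring
          omega
        refine Finset.sum_subset (Finset.range_subset_range.2 hle) fun t _ ht => ?_
        simp only [Finset.mem_range] at ht
        rw [coef_eq_zero_of_gt k q _ t (by omega), zero_mul]
      rw [Finset.sum_congr rfl h2, Finset.sum_comm]
      refine Finset.sum_congr rfl fun t _ => ?_
      rw [coef, Finset.sum_mul]


lemma genCatalan_eq_bal (K i x : ℕ) (hK : 1 ≤ K) :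
    genCatalan (K * i + x) (K + 1) = bal (K+1) (i + x / K) (x % K) := by
  obtain ⟨q, r, hx, hrK⟩ : ∃ q r, x = K * q + r ∧ r < K :=
    ⟨x / K, x % K, by rw [Nat.div_add_mod], Nat.mod_lt _ (by omega)⟩
  have hq : x / K = q := by rw [hx, Nat.mul_add_div (by omega), Nat.div_eq_of_lt hrK, Nat.add_zero]
  have hr : x % K = r := by rw [hx, Nat.mul_add_mod, Nat.mod_eq_of_lt hrK]
  have hm : K * i + x = K * (i + q) + r := by rw [hx]; ring
  have hK1 : K + 1 - 1 = K := by omega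
  have hdiv : (K * i + x) / K = i + q := by
    rw [hm, Nat.mul_add_div (by omega), Nat.div_eq_of_lt hrK, Nat.add_zero]
  rw [genCatalan, hK1, hdiv, hq, hr]
  have h1 : K * i + x - K * (i + q) + 1 = r + 1 := by
    rw [hm, Nat.add_sub_cancel_left]
  have h2 : K * i + x + (i + q) + 1 = (K+1) * (i + q) + r + 1 := by
    rw [hm]; ring
  have h3 : Nat.choose ((K+1)*(i+q) + r + 1) (K * i + x + 1)
      = Nat.choose ((K+1)*(i+q) + r + 1) (i + q) := by
    have hle : i + q ≤ (K+1)*(i+q) + r + 1 := by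
      have : i + q ≤ (K+1)*(i+q) := Nat.le_mul_of_pos_left _ (by omega)
      omega
    have hsub : (K+1)*(i+q) + r + 1 - (i + q) = K * i + x + 1 := by
      have : (K+1)*(i+q) = K*(i+q) + (i+q) := by ring
      omega
    rw [← hsub, Nat.choose_symm hle]
  rw [h1, h2, h3, bal]

theorem genCatalan_det_eq_binomial_det (n k : ℕ) (hn : 0 < n) (hk : 2 ≤ k) (β : ℕ)
    (hβ : β ≤ k - 1) :
    Matrix.det (Matrix.of fun i j : Fin n =>
      genCatalan ((k - 1) * i.1 + j.1 + β) k) =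
    Matrix.det (Matrix.of fun i j : Fin n =>
      ((j.1 + β + 1 : ℕ) : ℚ) / ((k * i.1 + j.1 + β + 1 : ℕ) : ℚ) *
        (Nat.choose (k * i.1 + j.1 + β + 1) i.1 : ℚ)) := by
  obtain ⟨K, rfl⟩ : ∃ K, k = K + 1 := ⟨k - 1, by omega⟩
  have hK : 1 ≤ K := by omega
  have hK1 : K + 1 - 1 = K := by omega
  rw [hK1] at hβ
  set k := K + 1 with hkdef
  have hk1 : 1 ≤ k := by omega
  have hkK : k - 1 = K := by omega
  -- the RHS matrix
  set A : Matrix (Fin n) (Fin n) ℚ := Matrix.of fun i j : Fin n => bal k i (j.1 + β) with hA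
  have hArhs : (Matrix.of fun i j : Fin n =>
      ((j.1 + β + 1 : ℕ) : ℚ) / ((k * i.1 + j.1 + β + 1 : ℕ) : ℚ) *
        (Nat.choose (k * i.1 + j.1 + β + 1) i.1 : ℚ)) = A := by
    ext i j
    simp only [hA, Matrix.of_apply, bal, add_assoc]
  set T : Matrix (Fin n) (Fin n) ℚ :=
    Matrix.of fun j' j : Fin n => coef k ((j.1 + β) / K) ((j.1 + β) % K) (j'.1 + β) with hT
  have hMT : (Matrix.of fun i j : Fin n =>
      genCatalan ((K + 1 - 1) * i.1 + j.1 + β) (K + 1)) = A * T := by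
    ext i j
    simp only [Matrix.of_apply, Matrix.mul_apply, hA, hT]
    have hbase : (K + 1 - 1) * i.1 + j.1 + β = K * i.1 + (j.1 + β) := by
      rw [hK1]; ring
    rw [hbase, genCatalan_eq_bal K i.1 (j.1 + β) hK]
    set x := j.1 + β with hxdef
    set q := x / K with hq
    set r := x % K with hr
    have hrq : r + q * K = x := Nat.mod_add_div' x K
    rw [bal_add_expand k hk1 q i.1 r]
    rw [hkK]
    have hre : r + q * K + 1 = x + 1 := by omega
    rw [hre]
    -- drop terms t < β
    have step1 : ∑ t ∈ Finset.range (x + 1), coef k q r t * bal k i.1 t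
        = ∑ t ∈ Finset.Ico β (x + 1), coef k q r t * bal k i.1 t := by
      rw [Finset.range_eq_Ico]
      refine (Finset.sum_subset (Finset.Ico_subset_Ico (Nat.zero_le _) le_rfl)
        fun t ht htn => ?_).symm
      simp only [Finset.mem_Ico] at ht htn
      have htβ : t < β := by omega
      have : coef k q r t = 0 := by
        rcases Nat.eq_zero_or_pos q with hq0 | hq1
        · have hrx : r = x := by simpa [hq0] using hrq
          have hxβ : β ≤ x := Nat.le_add_left _ _
          simp only [coef, hq0]
          rw [if_neg (by omega)]
        · exact coef_eq_zero_of_lt k q r t hq1 (by omega)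
      rw [this, zero_mul]
    rw [step1, Finset.sum_Ico_eq_sum_range]
    have hxb : x + 1 - β = j.1 + 1 := by omega
    rw [hxb]
    -- extend to range n
    have step2 : ∑ m ∈ Finset.range (j.1 + 1), coef k q r (β + m) * bal k i.1 (β + m)
        = ∑ m ∈ Finset.range n, coef k q r (β + m) * bal k i.1 (β + m) := by
      refine Finset.sum_subset (Finset.range_subset_range.2 j.2) fun m _ hm => ?_
      simp only [Finset.mem_range] at hm
      have hrq2 : r + q * K = j.1 + β := hrq
      rw [coef_eq_zero_of_gt k q r (β + m) (by rw [hkK]; omega), zero_mul]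
    rw [step2, ← Fin.sum_univ_eq_sum_range (fun m => coef k q r (β + m) * bal k i.1 (β + m)) n]
    refine Finset.sum_congr rfl fun j' _ => ?_
    rw [mul_comm, Nat.add_comm β j'.1]
  rw [hArhs, hMT, Matrix.det_mul]
  have hTtri : T.BlockTriangular id := by
    intro j' j hlt
    simp only [id] at hlt
    simp only [hT, Matrix.of_apply]
    refine coef_eq_zero_of_gt k _ _ _ ?_
    rw [hkK]
    have := Nat.mod_add_div' (j.1 + β) K
    have : j.1 < j'.1 := hlt
    omega
  rw [Matrix.det_of_upperTriangular hTtri]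
  have hdiag : ∀ j : Fin n, T j j = 1 := by
    intro j
    simp only [hT, Matrix.of_apply]
    have h := coef_diag k ((j.1 + β) / K) ((j.1 + β) % K)
    rw [hkK] at h
    rw [Nat.mod_add_div' (j.1 + β) K] at h
    exact h
  rw [Finset.prod_congr rfl (fun j _ => hdiag j), Finset.prod_const_one, mul_one]
end

section
/- Let n, k ≥ 2 be positive integers and β, α_0, ..., α_{n-1} positive integers. Then det_{0≤i,j≤n-1}(binom(kα_i + j + β, α_i − 1)) = (β!/(β+n)!) · ∏_{0≤i<j≤n-1}(α_j − α_i) · ∏_{i=0}^{n-1} (((k−1)i+β+n)! · (kα_i+β)!) / ((ki+β)! · (α_i−1)! · ((k−1)α_i+β+n)!), as an identity of rational numbers. -/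
open Finset Polynomial

lemma fact_prod_range (m : ℕ) : (m.factorial : ℚ) = ∏ u ∈ range m, ((u : ℚ) + 1) := by
  induction m with
  | zero => simp
  | succ m ih => rw [Nat.factorial_succ, prod_range_succ, ← ih]; push_cast; ring

lemma fact_shift (m s : ℕ) : (m + s).factorial = m.factorial * ∏ t ∈ range s, (m + t + 1) := by
  induction s with
  | zero => simp
  | succ s ih =>
    rw [prod_range_succ, ← mul_assoc, ← ih, ← Nat.add_assoc, Nat.factorial_succ]
    ring

lemma finIoi_prod {M : Type*} [CommMonoid M] (n : ℕ) (f : ℕ → ℕ → M) :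
    ∏ i : Fin n, ∏ j ∈ Finset.Ioi i, f i.1 j.1
      = ∏ i ∈ range n, ∏ j ∈ Finset.Ico (i + 1) n, f i j := by
  rw [← Fin.prod_univ_eq_prod_range (fun i => ∏ j ∈ Finset.Ico (i + 1) n, f i j) n]
  refine Finset.prod_congr rfl fun i _ => ?_
  calc ∏ j ∈ Finset.Ioi i, f i.1 j.1
      = ∏ j ∈ (Finset.Ioi i).map Fin.valEmbedding, f i.1 j :=
        (Finset.prod_map (Finset.Ioi i) Fin.valEmbedding (f i.1)).symm
    _ = ∏ j ∈ Finset.Ico (i.1 + 1) n, f i.1 j := by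
        rw [Fin.map_valEmbedding_Ioi]
        refine Finset.prod_congr ?_ fun j _ => rfl
        ext x
        simp only [Finset.mem_Ioc, Finset.mem_Ico, Finset.mem_Ioo]
        have := i.2
        omega

noncomputable def Pc (n κ β j : ℕ) : Polynomial ℚ :=
  (∏ t ∈ range j, (Polynomial.C ((κ : ℚ) + 2) * Polynomial.X + Polynomial.C ((β + t + 1 : ℕ) : ℚ))) *
  (∏ t ∈ range (n - 1 - j), (Polynomial.C ((κ : ℚ) + 1) * Polynomial.X + Polynomial.C ((β + j + 2 + t : ℕ) : ℚ)))

lemma natDeg_prod_lin_le (s : Finset ℕ) (a : ℚ) (b : ℕ → ℚ) :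
    (∏ t ∈ s, (Polynomial.C a * Polynomial.X + Polynomial.C (b t))).natDegree ≤ s.card := by
  refine le_trans (Polynomial.natDegree_prod_le _ _) ?_
  refine le_trans (Finset.sum_le_card_nsmul _ _ 1 fun t _ => Polynomial.natDegree_linear_le) ?_
  simp

lemma Pc_natDegree_lt (n κ β j : ℕ) (hj : j < n) : (Pc n κ β j).natDegree < n := by
  have h1 := natDeg_prod_lin_le (range j) ((κ : ℚ) + 2) (fun t => ((β + t + 1 : ℕ) : ℚ))
  have h2 := natDeg_prod_lin_le (range (n - 1 - j)) ((κ : ℚ) + 1) (fun t => ((β + j + 2 + t : ℕ) : ℚ))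
  have h3 := Polynomial.natDegree_mul_le
    (p := (∏ t ∈ range j, (Polynomial.C ((κ : ℚ) + 2) * Polynomial.X + Polynomial.C ((β + t + 1 : ℕ) : ℚ))))
    (q := (∏ t ∈ range (n - 1 - j), (Polynomial.C ((κ : ℚ) + 1) * Polynomial.X + Polynomial.C ((β + j + 2 + t : ℕ) : ℚ))))
  rw [Finset.card_range] at h1 h2
  unfold Pc
  omega

lemma Pc_eval (n κ β j : ℕ) (x : ℚ) : (Pc n κ β j).eval x =
    (∏ t ∈ range j, (((κ : ℚ) + 2) * x + ((β + t + 1 : ℕ) : ℚ))) *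
    (∏ t ∈ range (n - 1 - j), (((κ : ℚ) + 1) * x + ((β + j + 2 + t : ℕ) : ℚ))) := by
  simp [Pc, Polynomial.eval_prod]

noncomputable def Cm (n κ β : ℕ) : Matrix (Fin n) (Fin n) ℚ :=
  Matrix.of fun t j => (Pc n κ β j.1).coeff t.1

lemma det_eval (n κ β : ℕ) (v : Fin n → ℚ) :
    Matrix.det (Matrix.of fun i j : Fin n => (Pc n κ β j.1).eval (v i)) =
      (Matrix.vandermonde v).det * (Cm n κ β).det := by
  rw [← Matrix.det_mul]
  congr 1
  ext i j
  rw [Matrix.mul_apply]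
  simp only [Matrix.of_apply, Matrix.vandermonde, Cm]
  rw [Polynomial.eval_eq_sum_range' (Pc_natDegree_lt n κ β j.1 j.2) (v i)]
  rw [Finset.sum_range fun t => (Pc n κ β j.1).coeff t * v i ^ t]
  exact Finset.sum_congr rfl fun t _ => by rw [mul_comm]

lemma entry_eq (n κ β a' j : ℕ) (hj : j < n) :
    ((Nat.choose ((κ + 2) * (a' + 1) + j + β) a' : ℕ) : ℚ) =
      ((((κ + 2) * (a' + 1) + β).factorial : ℚ) /
        ((a'.factorial : ℚ) * ((((κ + 1) * (a' + 1) + β + n).factorial : ℚ)))) *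
      (Pc n κ β j).eval ((a' : ℚ) + 1) := by
  have key2 : (κ + 2) * (a' + 1) = (κ + 1) * (a' + 1) + (a' + 1) := by ring
  set B2 := (κ + 2) * (a' + 1) with hB2
  set B1 := (κ + 1) * (a' + 1) with hB1
  have h1 : a' ≤ B2 + j + β := by omega
  rw [Nat.cast_choose ℚ h1]
  have hsub : B2 + j + β - a' = B1 + β + j + 1 := by omega
  rw [hsub]
  have hnum : (B2 + j + β).factorial = (B2 + β).factorial * ∏ t ∈ range j, (B2 + β + t + 1) := by
    have h := fact_shift (B2 + β) j
    rwa [show B2 + β + j = B2 + j + β from by ring] at h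
  have hbig : (B1 + β + n).factorial
      = (B1 + β + j + 1).factorial * ∏ t ∈ range (n - 1 - j), (B1 + β + j + 1 + t + 1) := by
    have h := fact_shift (B1 + β + j + 1) (n - 1 - j)
    rwa [show B1 + β + j + 1 + (n - 1 - j) = B1 + β + n from by omega] at h
  rw [Pc_eval]
  have he1 : ∏ t ∈ range j, (((κ : ℚ) + 2) * ((a' : ℚ) + 1) + ((β + t + 1 : ℕ) : ℚ))
      = ((∏ t ∈ range j, (B2 + β + t + 1) : ℕ) : ℚ) := by
    rw [Nat.cast_prod]
    refine Finset.prod_congr rfl fun t _ => ?_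
    push_cast [hB2]
    ring
  have he2 : ∏ t ∈ range (n - 1 - j), (((κ : ℚ) + 1) * ((a' : ℚ) + 1) + ((β + j + 2 + t : ℕ) : ℚ))
      = ((∏ t ∈ range (n - 1 - j), (B1 + β + j + 1 + t + 1) : ℕ) : ℚ) := by
    rw [Nat.cast_prod]
    refine Finset.prod_congr rfl fun t _ => ?_
    push_cast [hB1]
    ring
  rw [he1, he2, hnum, hbig]
  have hf1 : ((a'.factorial : ℚ)) ≠ 0 := Nat.cast_ne_zero.mpr (Nat.factorial_ne_zero a')
  have hf2 : (((B1 + β + j + 1).factorial : ℚ)) ≠ 0 := Nat.cast_ne_zero.mpr (Nat.factorial_ne_zero _)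
  have hp2 : ((∏ t ∈ range (n - 1 - j), (B1 + β + j + 1 + t + 1) : ℕ) : ℚ) ≠ 0 := by
    rw [Nat.cast_ne_zero]
    exact Finset.prod_ne_zero_iff.mpr fun t _ => by omega
  push_cast
  field_simp

noncomputable def xq (κ β s : ℕ) : ℚ := -((β + s + 1 : ℕ) : ℚ) / ((κ : ℚ) + 1)

def Dv (κ β s : ℕ) : ℕ := ∏ i ∈ range s, ((κ + 1) * (i + 1) + β + s + 1)

lemma kcast_ne (κ : ℕ) : ((κ : ℚ) + 1) ≠ 0 := by positivity

lemma eval_x_zero (n κ β s j : ℕ) (hj : j < s) (hs : s < n) :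
    (Pc n κ β j).eval (xq κ β s) = 0 := by
  rw [Pc_eval]
  apply mul_eq_zero_of_right
  apply Finset.prod_eq_zero (i := s - j - 1) (by simp; omega)
  rw [show β + j + 2 + (s - j - 1) = β + s + 1 from by omega, xq]
  field_simp
  push_cast
  ring

lemma eval_x_diag (n κ β s : ℕ) (hs : s < n) :
    (Pc n κ β s).eval (xq κ β s) =
      ((-1) / ((κ : ℚ) + 1)) ^ s * ((Dv κ β s : ℕ) : ℚ) * (((n - 1 - s).factorial : ℚ)) := by
  rw [Pc_eval]
  have h1 : ∏ t ∈ range s, (((κ : ℚ) + 2) * (xq κ β s) + ((β + t + 1 : ℕ) : ℚ))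
      = ((-1) / ((κ : ℚ) + 1)) ^ s * ((Dv κ β s : ℕ) : ℚ) := by
    have step : ∀ t ∈ range s, (((κ : ℚ) + 2) * (xq κ β s) + ((β + t + 1 : ℕ) : ℚ))
        = ((-1) / ((κ : ℚ) + 1)) * ((((κ + 1) * ((s - 1 - t) + 1) + β + s + 1 : ℕ)) : ℚ) := by
      intro t ht
      rw [Finset.mem_range] at ht
      rw [show (s - 1 - t) + 1 = s - t from by omega, xq]
      have hc := kcast_ne κ
      push_cast [Nat.cast_sub (le_of_lt ht)]
      field_simp
      ring
    rw [Finset.prod_congr rfl step, Finset.prod_mul_distrib, Finset.prod_const,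
      Finset.card_range]
    congr 1
    rw [Finset.prod_range_reflect (fun i => ((((κ + 1) * (i + 1) + β + s + 1 : ℕ)) : ℚ)) s]
    rw [Dv, Nat.cast_prod]
  have h2 : ∏ t ∈ range (n - 1 - s), (((κ : ℚ) + 1) * (xq κ β s) + ((β + s + 2 + t : ℕ) : ℚ))
      = (((n - 1 - s).factorial : ℚ)) := by
    rw [fact_prod_range]
    refine Finset.prod_congr rfl fun t _ => ?_
    rw [xq]
    have hc := kcast_ne κ
    push_cast
    field_simp
    ring
  rw [h1, h2]

lemma detCm (n κ β : ℕ) : (Cm n κ β).det = ∏ s ∈ range n, ((Dv κ β s : ℕ) : ℚ) := by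
  classical
  set c : ℚ := (-1) / ((κ : ℚ) + 1) with hc
  have hcne : c ≠ 0 := by
    rw [hc]
    simp [kcast_ne κ]
  set x : Fin n → ℚ := fun s => xq κ β s.1 with hx
  have hM : Matrix.det (Matrix.of fun i j : Fin n => (Pc n κ β j.1).eval (x i))
      = ∏ s ∈ range n, (c ^ s * (((Dv κ β s : ℕ)) : ℚ) * (((n - 1 - s).factorial : ℚ))) := by
    rw [Matrix.det_of_upperTriangular (M := Matrix.of fun i j : Fin n => (Pc n κ β j.1).eval (x i))
      (fun i j hji => eval_x_zero n κ β i.1 j.1 hji i.2)]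
    simp only [Matrix.of_apply]
    rw [Fin.prod_univ_eq_prod_range (fun s => (Pc n κ β s).eval (xq κ β s)) n]
    exact Finset.prod_congr rfl fun s hs => eval_x_diag n κ β s (Finset.mem_range.mp hs)
  have hV : (Matrix.vandermonde x).det
      = ∏ i ∈ range n, (c ^ (n - 1 - i) * (((n - 1 - i).factorial : ℚ))) := by
    rw [Matrix.det_vandermonde]
    have step1 : ∏ i : Fin n, ∏ j ∈ Finset.Ioi i, (x j - x i)
        = ∏ i : Fin n, ∏ j ∈ Finset.Ioi i, (fun a b : ℕ => c * ((b : ℚ) - (a : ℚ))) i.1 j.1 := by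
      refine Finset.prod_congr rfl fun i _ => Finset.prod_congr rfl fun j _ => ?_
      simp only [hx, xq, hc]
      have hk := kcast_ne κ
      push_cast
      field_simp
      ring
    rw [step1, finIoi_prod n (fun a b : ℕ => c * ((b : ℚ) - (a : ℚ)))]
    refine Finset.prod_congr rfl fun i hi => ?_
    rw [Finset.prod_Ico_eq_prod_range]
    have step2 : ∀ u ∈ range (n - (i + 1)), c * (((i + 1 + u : ℕ) : ℚ) - (i : ℚ))
        = c * ((u : ℚ) + 1) := by
      intro u _
      push_cast
      ring
    rw [Finset.prod_congr rfl step2, Finset.prod_mul_distrib, Finset.prod_const,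
      Finset.card_range, ← fact_prod_range, show n - (i + 1) = n - 1 - i from by omega]
  have hE := det_eval n κ β x
  rw [hM, hV] at hE
  have hVne : (∏ i ∈ range n, (c ^ (n - 1 - i) * (((n - 1 - i).factorial : ℚ)))) ≠ 0 := by
    refine Finset.prod_ne_zero_iff.mpr fun i _ => ?_
    exact mul_ne_zero (pow_ne_zero _ hcne) (Nat.cast_ne_zero.mpr (Nat.factorial_ne_zero _))
  refine mul_left_cancel₀ hVne ?_
  rw [← hE]
  rw [Finset.prod_mul_distrib, Finset.prod_mul_distrib, Finset.prod_mul_distrib]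
  rw [show ∏ i ∈ range n, c ^ (n - 1 - i) = ∏ i ∈ range n, c ^ i from
    Finset.prod_range_reflect (fun i => c ^ i) n]
  ring

lemma Dv_key (κ β n : ℕ) : Dv κ β n * (β + n + 1)
    = (∏ i ∈ range n, ((κ + 1) * i + β + n + 1)) * ((κ + 2) * n + β + 1) := by
  have h0 := Finset.prod_range_succ' (fun i => (κ + 1) * i + β + n + 1) n
  have h1 := Finset.prod_range_succ (fun i => (κ + 1) * i + β + n + 1) n
  have hDv : Dv κ β n = ∏ i ∈ range n, ((κ + 1) * (i + 1) + β + n + 1) := rfl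
  have e0 : (κ + 1) * 0 + β + n + 1 = β + n + 1 := by ring
  have en : (κ + 1) * n + β + n + 1 = (κ + 2) * n + β + 1 := by ring
  rw [hDv]
  calc (∏ i ∈ range n, ((κ + 1) * (i + 1) + β + n + 1)) * (β + n + 1)
      = (∏ i ∈ range n, ((κ + 1) * (i + 1) + β + n + 1)) * ((κ + 1) * 0 + β + n + 1) := by
        rw [e0]
    _ = ∏ i ∈ range (n + 1), ((κ + 1) * i + β + n + 1) := h0.symm
    _ = (∏ i ∈ range n, ((κ + 1) * i + β + n + 1)) * ((κ + 1) * n + β + n + 1) := h1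
    _ = _ := by rw [en]


lemma prodD (κ β : ℕ) : ∀ n : ℕ,
    (∏ s ∈ range n, ((Dv κ β s : ℕ) : ℚ)) * (((β + n).factorial : ℚ)) *
      ∏ i ∈ range n, ((((κ + 2) * i + β).factorial : ℕ) : ℚ)
    = ((β.factorial : ℕ) : ℚ) * ∏ i ∈ range n, ((((κ + 1) * i + β + n).factorial : ℕ) : ℚ) := by
  intro n
  induction n with
  | zero => simp
  | succ n ih =>
    have key : ((Dv κ β n : ℕ) : ℚ) * (((β + n + 1 : ℕ) : ℕ) : ℚ)
        = (∏ i ∈ range n, (((κ + 1) * i + β + n + 1 : ℕ) : ℚ)) * ((((κ + 2) * n + β + 1 : ℕ)) : ℚ) := by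
      exact_mod_cast Dv_key κ β n
    have hGf : ∏ i ∈ range n, ((((κ + 1) * i + β + (n + 1)).factorial : ℕ) : ℚ)
        = (∏ i ∈ range n, ((((κ + 1) * i + β + n).factorial : ℕ) : ℚ)) *
          (∏ i ∈ range n, (((κ + 1) * i + β + n + 1 : ℕ) : ℚ)) := by
      rw [← Finset.prod_mul_distrib]
      refine Finset.prod_congr rfl fun i _ => ?_
      rw [show (κ + 1) * i + β + (n + 1) = ((κ + 1) * i + β + n) + 1 from by ring,
        Nat.factorial_succ]
      push_cast
      ring
    rw [Finset.prod_range_succ, Finset.prod_range_succ, Finset.prod_range_succ, hGf]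
    rw [show β + (n + 1) = (β + n) + 1 from by ring, Nat.factorial_succ]
    rw [show (κ + 1) * n + β + (n + 1) = ((κ + 2) * n + β) + 1 from by ring,
      Nat.factorial_succ]
    push_cast
    push_cast at ih key
    linear_combination
      (((Dv κ β n : ℕ) : ℚ) * ((β : ℚ) + n + 1)) * ((((κ + 2) * n + β).factorial : ℕ) : ℚ) * ih +
      (((β.factorial : ℕ) : ℚ) * ∏ i ∈ range n, ((((κ + 1) * i + β + n).factorial : ℕ) : ℚ)) *
        ((((κ + 2) * n + β).factorial : ℕ) : ℚ) * key

theorem binomial_det_genCatalan_form (n k : ℕ) (hn : 0 < n) (hk : 2 ≤ k) (β : ℕ)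
    (hβ : 0 < β) (α : ℕ → ℕ) (hα : ∀ i < n, 0 < α i) :
    Matrix.det (Matrix.of fun i j : Fin n =>
      (Nat.choose (k * α i.1 + j.1 + β) (α i.1 - 1) : ℚ)) =
    ((Nat.factorial β : ℚ) / (Nat.factorial (β + n) : ℚ)) *
    (∏ i ∈ Finset.range n, ∏ j ∈ Finset.Ico (i + 1) n, ((α j : ℚ) - (α i : ℚ))) *
    ∏ i ∈ Finset.range n,
      ((Nat.factorial ((k - 1) * i + β + n) : ℚ) * (Nat.factorial (k * α i + β) : ℚ)) /
        ((Nat.factorial (k * i + β) : ℚ) * (Nat.factorial (α i - 1) : ℚ) *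
          (Nat.factorial ((k - 1) * α i + β + n) : ℚ)) := by
  obtain ⟨κ, rfl⟩ : ∃ κ, k = κ + 2 := ⟨k - 2, by omega⟩
  have hk1 : κ + 2 - 1 = κ + 1 := rfl
  rw [hk1]
  set B : Matrix (Fin n) (Fin n) ℚ :=
    Matrix.of fun i j : Fin n => (Pc n κ β j.1).eval ((α i.1 : ℚ)) with hB
  set c : Fin n → ℚ := fun i => ((((κ + 2) * α i.1 + β).factorial : ℕ) : ℚ) /
      ((((α i.1 - 1).factorial : ℕ) : ℚ) * ((((κ + 1) * α i.1 + β + n).factorial : ℕ) : ℚ))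
    with hc
  have hentry : ∀ i j : Fin n,
      ((Nat.choose ((κ + 2) * α i.1 + j.1 + β) (α i.1 - 1) : ℕ) : ℚ) = c i * B i j := by
    intro i j
    obtain ⟨a', ha⟩ : ∃ a', α i.1 = a' + 1 := ⟨α i.1 - 1, by have := hα i.1 i.2; omega⟩
    simp only [hc, hB, Matrix.of_apply, ha, Nat.add_sub_cancel]
    have h := entry_eq n κ β a' j.1 j.2
    rw [show ((a' + 1 : ℕ) : ℚ) = (a' : ℚ) + 1 from by push_cast; ring, h]
  have hdet1 : Matrix.det (Matrix.of fun i j : Fin n =>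
      ((Nat.choose ((κ + 2) * α i.1 + j.1 + β) (α i.1 - 1) : ℕ) : ℚ))
      = (∏ i : Fin n, c i) * B.det := by
    rw [← Matrix.det_mul_column]
    congr 1
    ext i j
    exact hentry i j
  rw [hdet1, hB, det_eval n κ β (fun i => (α i.1 : ℚ)), Matrix.det_vandermonde, detCm]
  rw [finIoi_prod n (fun a b => (α b : ℚ) - (α a : ℚ))]
  rw [Fin.prod_univ_eq_prod_range (fun i => ((((κ + 2) * α i + β).factorial : ℕ) : ℚ) /
      ((((α i - 1).factorial : ℕ) : ℚ) * ((((κ + 1) * α i + β + n).factorial : ℕ) : ℚ))) n]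
  set V : ℚ := ∏ i ∈ range n, ∏ j ∈ Finset.Ico (i + 1) n, ((α j : ℚ) - (α i : ℚ)) with hV
  have main : (∏ i ∈ range n, (((((κ + 2) * α i + β).factorial : ℕ) : ℚ) /
        ((((α i - 1).factorial : ℕ) : ℚ) * ((((κ + 1) * α i + β + n).factorial : ℕ) : ℚ)))) *
      (∏ s ∈ range n, ((Dv κ β s : ℕ) : ℚ))
      = (((β.factorial : ℕ) : ℚ) / (((β + n).factorial : ℕ) : ℚ)) *
        ∏ i ∈ range n, (((((κ + 1) * i + β + n).factorial : ℕ) : ℚ) *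
            ((((κ + 2) * α i + β).factorial : ℕ) : ℚ)) /
          (((((κ + 2) * i + β).factorial : ℕ) : ℚ) * (((α i - 1).factorial : ℕ) : ℚ) *
            ((((κ + 1) * α i + β + n).factorial : ℕ) : ℚ)) := by
    have hP := prodD κ β n
    rw [Finset.prod_div_distrib, Finset.prod_div_distrib, Finset.prod_mul_distrib,
      Finset.prod_mul_distrib, Finset.prod_mul_distrib]
    have ne1 : (((β + n).factorial : ℕ) : ℚ) ≠ 0 := Nat.cast_ne_zero.mpr (Nat.factorial_ne_zero _)
    have ne2 : (∏ i ∈ range n, ((((κ + 2) * i + β).factorial : ℕ) : ℚ)) ≠ 0 :=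
      Finset.prod_ne_zero_iff.mpr fun i _ => Nat.cast_ne_zero.mpr (Nat.factorial_ne_zero _)
    have ne3 : (∏ i ∈ range n, (((α i - 1).factorial : ℕ) : ℚ)) ≠ 0 :=
      Finset.prod_ne_zero_iff.mpr fun i _ => Nat.cast_ne_zero.mpr (Nat.factorial_ne_zero _)
    have ne4 : (∏ i ∈ range n, ((((κ + 1) * α i + β + n).factorial : ℕ) : ℚ)) ≠ 0 :=
      Finset.prod_ne_zero_iff.mpr fun i _ => Nat.cast_ne_zero.mpr (Nat.factorial_ne_zero _)
    field_simp
    rw [Finset.prod_mul_distrib]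
    linear_combination (∏ i ∈ range n, (((α i - 1).factorial : ℕ) : ℚ)) * hP
  linear_combination V * main
end

section
/- Let α_0 ≤ α_1 ≤ ... ≤ α_{n-1} be non-negative integers and c − b ≥ 0. Then det_{0≤i,j≤n-1}(binom(α_j − a + c − b + i, c − b + i)) = ∏_{0≤i<j≤n-1}(α_j − α_i) · ∏_{i=0}^{n-1} (α_i + c − a − b)! / ((α_i − a)! · (c − b + i)!), where a ≤ α_0 and b ≤ c are integers. -/
open Finset Polynomial

private lemma entry_eq_s15 (M K I : ℕ) :
    ((M + K + I).choose (K + I) : ℚ) =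
      (((K + I).factorial : ℚ))⁻¹ * ((((M + K).factorial : ℚ) / (M.factorial : ℚ)) *
        (ascPochhammer ℚ I).eval ((M + K + 1 : ℕ) : ℚ)) := by
  have h1 : (ascPochhammer ℚ I).eval ((M + K + 1 : ℕ) : ℚ)
      = ((M + K + 1).ascFactorial I : ℚ) := by
    rw [← ascPochhammer_nat_eq_ascFactorial, ascPochhammer_eval_cast]
  have h2 : (M + K).factorial * (M + K + 1).ascFactorial I = (M + K + I).factorial :=
    Nat.factorial_mul_ascFactorial _ _
  have h3 : (M + K + I).choose (K + I) * (K + I).factorial * M.factorial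
      = (M + K + I).factorial := by
    have := Nat.choose_mul_factorial_mul_factorial (show K + I ≤ M + K + I by omega)
    simpa [show M + K + I - (K + I) = M by omega] using this
  have hKI : (((K + I).factorial : ℚ)) ≠ 0 := Nat.cast_ne_zero.mpr (Nat.factorial_ne_zero _)
  have hM : ((M.factorial : ℚ)) ≠ 0 := Nat.cast_ne_zero.mpr (Nat.factorial_ne_zero _)
  rw [h1]
  field_simp
  have h2' : ((M + K).factorial : ℚ) * ((M + K + 1).ascFactorial I : ℚ)
      = ((M + K + I).factorial : ℚ) := by exact_mod_cast congrArg (Nat.cast : ℕ → ℚ) h2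
  have h3' : ((M + K + I).choose (K + I) : ℚ) * ((K + I).factorial : ℚ) * (M.factorial : ℚ)
      = ((M + K + I).factorial : ℚ) := by exact_mod_cast congrArg (Nat.cast : ℕ → ℚ) h3
  linear_combination h3' - h2'

theorem shifted_binomial_det (n : ℕ) (hn : 0 < n) (a b c : ℤ) (α : ℕ → ℤ)
    (hα0 : 0 ≤ α 0) (ha : a ≤ α 0) (hbc : b ≤ c)
    (hmono : ∀ i, i + 1 < n → α i ≤ α (i + 1)) :
    Matrix.det (Matrix.of fun i j : Fin n =>
      (Nat.choose (α j.1 - a + c - b + i.1).toNat (c - b + i.1).toNat : ℚ)) =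
    (∏ i ∈ Finset.range n, ∏ j ∈ Finset.Ico (i + 1) n, ((α j - α i : ℤ) : ℚ)) *
    ∏ i ∈ Finset.range n,
      (Nat.factorial (α i + c - a - b).toNat : ℚ) /
        ((Nat.factorial (α i - a).toNat : ℚ) * (Nat.factorial (c - b + i).toNat : ℚ)) := by
  have hmono' : ∀ j, j < n → α 0 ≤ α j := by
    intro j hj
    induction j with
    | zero => exact le_refl _
    | succ j ih => exact le_trans (ih (by omega)) (hmono j hj)
  have haj : ∀ j, j < n → a ≤ α j := fun j hj => le_trans ha (hmono' j hj)
  set k : ℕ := (c - b).toNat with hkdef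
  set m : ℕ → ℕ := fun j => (α j - a).toNat with hmdef
  have hk : ((k : ℤ)) = c - b := Int.toNat_of_nonneg (by omega)
  have hm : ∀ j, j < n → ((m j : ℤ)) = α j - a := fun j hj =>
    Int.toNat_of_nonneg (by have := haj j hj; omega)
  have hidx1 : ∀ (i j : Fin n), (α j.1 - a + c - b + i.1).toNat = m j.1 + k + i.1 := by
    intro i j
    have h1 := hm j.1 j.2
    have h : (α j.1 - a + c - b + i.1 : ℤ) = ((m j.1 + k + i.1 : ℕ) : ℤ) := by
      push_cast; omega
    rw [h, Int.toNat_natCast]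
  have hidx2 : ∀ (i : ℕ), (c - b + i).toNat = k + i := by
    intro i
    have h : (c - b + i : ℤ) = ((k + i : ℕ) : ℤ) := by push_cast; omega
    rw [h, Int.toNat_natCast]
  have hidx3 : ∀ j, j < n → (α j + c - a - b).toNat = m j + k := by
    intro j hj
    have h1 := hm j hj
    have h : (α j + c - a - b : ℤ) = ((m j + k : ℕ) : ℤ) := by push_cast; omega
    rw [h, Int.toNat_natCast]
  -- rewrite the matrix entries
  have hmat : (Matrix.of fun i j : Fin n =>
        (Nat.choose (α j.1 - a + c - b + i.1).toNat (c - b + i.1).toNat : ℚ))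
      = Matrix.of fun i j : Fin n =>
        (((k + i.1).factorial : ℚ))⁻¹ * ((((m j.1 + k).factorial : ℚ) / ((m j.1).factorial : ℚ)) *
          (ascPochhammer ℚ i.1).eval ((m j.1 + k + 1 : ℕ) : ℚ)) := by
    ext i j
    simp only [Matrix.of_apply]
    rw [hidx1 i j, hidx2 i.1]
    exact entry_eq_s15 (m j.1) k i.1
  rw [hmat]
  rw [show (Matrix.of fun i j : Fin n =>
        (((k + i.1).factorial : ℚ))⁻¹ * ((((m j.1 + k).factorial : ℚ) / ((m j.1).factorial : ℚ)) *
          (ascPochhammer ℚ i.1).eval ((m j.1 + k + 1 : ℕ) : ℚ)))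
      = Matrix.of (fun i j : Fin n => (((k + i.1).factorial : ℚ))⁻¹ *
          (Matrix.of fun i j : Fin n =>
            (((m j.1 + k).factorial : ℚ) / ((m j.1).factorial : ℚ)) *
              (ascPochhammer ℚ i.1).eval ((m j.1 + k + 1 : ℕ) : ℚ)) i j) from rfl]
  rw [Matrix.det_mul_column (fun i : Fin n => (((k + i.1).factorial : ℚ))⁻¹)]
  rw [show (Matrix.of fun i j : Fin n =>
        (((m j.1 + k).factorial : ℚ) / ((m j.1).factorial : ℚ)) *
          (ascPochhammer ℚ i.1).eval ((m j.1 + k + 1 : ℕ) : ℚ))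
      = Matrix.of (fun i j : Fin n =>
          (((m j.1 + k).factorial : ℚ) / ((m j.1).factorial : ℚ)) *
          (Matrix.of fun i j : Fin n =>
            (ascPochhammer ℚ i.1).eval ((m j.1 + k + 1 : ℕ) : ℚ)) i j) from rfl]
  rw [Matrix.det_mul_row (fun j : Fin n => (((m j.1 + k).factorial : ℚ) / ((m j.1).factorial : ℚ)))]
  have hvdm : (Matrix.of fun i j : Fin n =>
        (ascPochhammer ℚ i.1).eval ((m j.1 + k + 1 : ℕ) : ℚ)).det
      = (Matrix.vandermonde fun j : Fin n => ((m j.1 + k + 1 : ℕ) : ℚ)).det := by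
    rw [← Matrix.det_transpose]
    exact (Matrix.det_eval_matrixOfPolynomials_eq_det_vandermonde
      (fun j : Fin n => ((m j.1 + k + 1 : ℕ) : ℚ))
      (fun i : Fin n => ascPochhammer ℚ i.1)
      (fun i => ascPochhammer_natDegree (S := ℚ) i.1)
      (fun i => monic_ascPochhammer (S := ℚ) i.1)).symm
  rw [hvdm, Matrix.det_vandermonde]
  have hv : (∏ i : Fin n, ∏ j ∈ Finset.Ioi i,
        (((m j.1 + k + 1 : ℕ) : ℚ) - ((m i.1 + k + 1 : ℕ) : ℚ)))
      = ∏ i ∈ Finset.range n, ∏ j ∈ Finset.Ico (i + 1) n, ((α j - α i : ℤ) : ℚ) := by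
    rw [← Fin.prod_univ_eq_prod_range
      (fun t => ∏ j ∈ Finset.Ico (t + 1) n, ((α j - α t : ℤ) : ℚ))]
    apply Finset.prod_congr rfl
    intro i _
    have hico : Finset.Ico (i.1 + 1) n = Finset.Ioc i.1 (n - 1) := by
      ext x; simp only [Finset.mem_Ico, Finset.mem_Ioc]; omega
    rw [show Finset.Ico (i.1 + 1) n = Finset.Ioo i.1 n by ext x; simp only [Finset.mem_Ico, Finset.mem_Ioo]; omega,
      ← Fin.map_valEmbedding_Ioi, Finset.prod_map]
    apply Finset.prod_congr rfl
    intro j _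
    have ej : ((m j.1 : ℚ)) = ((α j.1 : ℚ)) - ((a : ℚ)) := by exact_mod_cast hm j.1 j.2
    have ei : ((m i.1 : ℚ)) = ((α i.1 : ℚ)) - ((a : ℚ)) := by exact_mod_cast hm i.1 i.2
    simp only [Fin.valEmbedding_apply]
    push_cast
    rw [ej, ei]
    ring
  have hpr : (∏ i : Fin n, (((k + i.1).factorial : ℚ))⁻¹) *
      (∏ j : Fin n, (((m j.1 + k).factorial : ℚ) / ((m j.1).factorial : ℚ)))
      = ∏ i ∈ Finset.range n,
        (Nat.factorial (α i + c - a - b).toNat : ℚ) /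
          ((Nat.factorial (α i - a).toNat : ℚ) * (Nat.factorial (c - b + i).toNat : ℚ)) := by
    rw [← Finset.prod_mul_distrib]
    rw [← Fin.prod_univ_eq_prod_range (fun i =>
      (Nat.factorial (α i + c - a - b).toNat : ℚ) /
        ((Nat.factorial (α i - a).toNat : ℚ) * (Nat.factorial (c - b + i).toNat : ℚ)))]
    apply Finset.prod_congr rfl
    intro i _
    rw [hidx3 i.1 i.2, hidx2 i.1]
    show (((k + i.1).factorial : ℚ))⁻¹ * (((m i.1 + k).factorial : ℚ) / ((m i.1).factorial : ℚ))
      = ((m i.1 + k).factorial : ℚ) / (((m i.1).factorial : ℚ) * (((k + i.1).factorial : ℚ)))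
    field_simp
  rw [hv, ← hpr]
  ring
end

section
/- Let X_0, ..., X_{n-1}, A_1, ..., A_{n-1}, B_1, ..., B_{n-1} be elements of a commutative ring. Then det_{0≤i,j≤n-1}((X_i+A_{n-1})(X_i+A_{n-2})···(X_i+A_{j+1})·(X_i+B_j)(X_i+B_{j-1})···(X_i+B_1)) = ∏_{0≤i<j≤n-1}(X_i − X_j) · ∏_{1≤i≤j≤n-1}(B_i − A_j). -/
open Finset

namespace KrattenthalerAux

/-! ### Generic product helpers -/

lemma prod_Ico_Ico_comm' {M : Type*} [CommMonoid M] (a b : ℕ) (f : ℕ → ℕ → M) :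
    (∏ i ∈ Finset.Ico a b, ∏ j ∈ Finset.Ico (i + 1) b, f i j) =
      ∏ j ∈ Finset.Ico a b, ∏ i ∈ Finset.Ico a j, f i j := by
  rw [Finset.prod_sigma', Finset.prod_sigma']
  refine Finset.prod_nbij' (fun x ↦ ⟨x.2, x.1⟩) (fun x ↦ ⟨x.2, x.1⟩) ?_ ?_ (fun _ _ ↦ rfl)
    (fun _ _ ↦ rfl) (fun _ _ ↦ rfl) <;>
  simp only [Finset.mem_Ico, Sigma.forall, Finset.mem_sigma] <;>
  rintro a b ⟨⟨h₁, h₂⟩, ⟨h₃, h₄⟩⟩ <;>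
  omega

lemma prod_fin_Ioi {M : Type*} [CommMonoid M] (n : ℕ) (F : ℕ → ℕ → M) :
    (∏ i : Fin n, ∏ j ∈ Finset.Ioi i, F i.1 j.1) =
      ∏ i ∈ Finset.range n, ∏ j ∈ Finset.Ico (i + 1) n, F i j := by
  rw [← Fin.prod_univ_eq_prod_range (fun i => ∏ j ∈ Finset.Ico (i + 1) n, F i j) n]
  refine Finset.prod_congr rfl fun i _ => ?_
  have hset : Finset.Ico (i.1 + 1) n = (Finset.Ioi i).map Fin.valEmbedding := by
    rw [Fin.map_valEmbedding_Ioi]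
    ext j
    simp only [Finset.mem_Ioo, Finset.mem_Ico]
    have := i.2
    omega
  rw [hset, Finset.prod_map]
  rfl

lemma prod_shift {M : Type*} [CommMonoid M] (m : ℕ) (f : ℕ → M) :
    ∏ i ∈ Finset.range m, f (i + 1) = ∏ i ∈ Finset.Ico 1 (m + 1), f i := by
  rw [Finset.prod_Ico_eq_prod_range]
  simp [add_comm]

/-! ### The generic ring -/

abbrev S : Type := MvPolynomial (ℕ ⊕ ℕ ⊕ ℕ) ℤ

noncomputable def xv (i : ℕ) : S := MvPolynomial.X (Sum.inl i)
noncomputable def av (t : ℕ) : S := MvPolynomial.X (Sum.inr (Sum.inl t))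
noncomputable def bv (t : ℕ) : S := MvPolynomial.X (Sum.inr (Sum.inr t))
noncomputable def xs (i : ℕ) : S := if i = 0 then xv 0 else -bv i

lemma prod_neg_eq (s : Finset ℕ) (f : ℕ → S) :
    ∏ i ∈ s, (-f i) = (-1) ^ s.card * ∏ i ∈ s, f i := by
  simp_rw [neg_eq_neg_one_mul (f _)]
  rw [Finset.prod_mul_distrib, Finset.prod_const]

/-! ### Factorization through the coefficient matrix -/

noncomputable def P (n j : ℕ) : Polynomial S :=
  (∏ t ∈ Finset.Ico (j + 1) n, (Polynomial.X + Polynomial.C (av t))) *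
    ∏ t ∈ Finset.Icc 1 j, (Polynomial.X + Polynomial.C (bv t))

lemma P_natDegree_lt {n j : ℕ} (hj : j < n) : (P n j).natDegree < n := by
  have h1 : (∏ t ∈ Finset.Ico (j + 1) n, (Polynomial.X + Polynomial.C (av t))).natDegree
      ≤ n - (j + 1) := by
    refine (Polynomial.natDegree_prod_le _ _).trans ?_
    simp [Polynomial.natDegree_X_add_C]
  have h2 : (∏ t ∈ Finset.Icc 1 j, (Polynomial.X + Polynomial.C (bv t))).natDegree ≤ j := by
    refine (Polynomial.natDegree_prod_le _ _).trans ?_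
    simp [Polynomial.natDegree_X_add_C, Nat.card_Icc]
  have := Polynomial.natDegree_mul_le (p := ∏ t ∈ Finset.Ico (j + 1) n,
    (Polynomial.X + Polynomial.C (av t))) (q := ∏ t ∈ Finset.Icc 1 j,
    (Polynomial.X + Polynomial.C (bv t)))
  unfold P
  omega

lemma P_eval (n j : ℕ) (y : S) :
    (P n j).eval y =
      (∏ t ∈ Finset.Ico (j + 1) n, (y + av t)) * ∏ t ∈ Finset.Icc 1 j, (y + bv t) := by
  simp [P, Polynomial.eval_prod]

noncomputable def Cmat (n : ℕ) : Matrix (Fin n) (Fin n) S :=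
  Matrix.of fun k j : Fin n => (P n j.1).coeff k.1

lemma key (n : ℕ) (x : ℕ → S) :
    (Matrix.of fun i j : Fin n =>
      (∏ t ∈ Finset.Ico (j.1 + 1) n, (x i.1 + av t)) *
        ∏ t ∈ Finset.Icc 1 j.1, (x i.1 + bv t)).det =
      (Matrix.vandermonde fun i : Fin n => x i.1).det * (Cmat n).det := by
  rw [← Matrix.det_mul]
  congr 1
  refine Matrix.ext fun i j => ?_
  rw [Matrix.mul_apply]
  have : ∀ k : Fin n, Matrix.vandermonde (fun i : Fin n => x i.1) i k * Cmat n k j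
      = (P n j.1).coeff k.1 * x i.1 ^ k.1 := by
    intro k
    simp [Matrix.vandermonde, Cmat, mul_comm]
  simp_rw [this]
  rw [Fin.sum_univ_eq_sum_range (fun k => (P n j.1).coeff k * x i.1 ^ k) n]
  rw [← Polynomial.eval_eq_sum_range' (P_natDegree_lt j.2), P_eval]
  rfl

/-! ### Evaluating at the special point -/

noncomputable def W (m k : ℕ) : S :=
  (∏ t ∈ Finset.Ico (k + 1) (m + 1), (-bv (k + 1) + av t)) *
    ∏ t ∈ Finset.Icc 1 k, (-bv (k + 1) + bv t)

lemma detZ (m : ℕ) :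
    (Matrix.of fun i j : Fin (m + 1) =>
      (∏ t ∈ Finset.Ico (j.1 + 1) (m + 1), (xs i.1 + av t)) *
        ∏ t ∈ Finset.Icc 1 j.1, (xs i.1 + bv t)).det =
      ((-1 : S) ^ m) * ((∏ i ∈ Finset.range m, W m i) * ∏ t ∈ Finset.Icc 1 m, (xv 0 + bv t)) := by
  set Z : Matrix (Fin (m + 1)) (Fin (m + 1)) S := Matrix.of fun i j : Fin (m + 1) =>
      (∏ t ∈ Finset.Ico (j.1 + 1) (m + 1), (xs i.1 + av t)) *
        ∏ t ∈ Finset.Icc 1 j.1, (xs i.1 + bv t) with hZ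
  have hzero : ∀ r j : Fin (m + 1), 1 ≤ r.1 → r.1 ≤ j.1 → Z r j = 0 := by
    intro r j h1 h2
    have hxr : xs r.1 + bv r.1 = 0 := by
      rw [xs, if_neg (by omega)]
      ring
    have : (∏ t ∈ Finset.Icc 1 j.1, (xs r.1 + bv t)) = 0 :=
      Finset.prod_eq_zero (Finset.mem_Icc.mpr ⟨h1, h2⟩) hxr
    simp [hZ, this]
  have hrot : ∀ i : Fin (m + 1), i.1 < m → ((finRotate (m + 1)) i).1 = i.1 + 1 := by
    intro i hi
    rw [finRotate_succ_apply, Fin.val_add_one_of_lt]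
    exact Fin.lt_def.mpr (by simpa using hi)
  have htri : (Z.submatrix (finRotate (m + 1)) id).BlockTriangular OrderDual.toDual := by
    intro i j hij
    have hij' : (i : Fin (m + 1)) < j := hij
    have hj : j.1 ≤ m := Nat.lt_succ_iff.mp j.2
    have hi : i.1 < m := lt_of_lt_of_le hij' hj
    simp only [Matrix.submatrix_apply, id]
    exact hzero _ _ (by rw [hrot i hi]; omega) (by rw [hrot i hi]; exact Fin.lt_def.mp hij')
  have hdetL := Matrix.det_of_lowerTriangular _ htri
  have hperm := Matrix.det_permute (finRotate (m + 1)) Z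
  have hsign : ((Equiv.Perm.sign (finRotate (m + 1)) : ℤ) : S) = (-1) ^ m := by
    rw [sign_finRotate]
    push_cast
    ring
  have hdiag : (∏ i : Fin (m + 1), (Z.submatrix (finRotate (m + 1)) id) i i) =
      (∏ i ∈ Finset.range m, W m i) * ∏ t ∈ Finset.Icc 1 m, (xv 0 + bv t) := by
    rw [Fin.prod_univ_castSucc]
    congr 1
    · rw [← Fin.prod_univ_eq_prod_range (fun i => W m i) m]
      refine Finset.prod_congr rfl fun i _ => ?_
      have hic : (i.castSucc : Fin (m + 1)).1 = i.1 := rfl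
      have hr : ((finRotate (m + 1)) i.castSucc).1 = i.1 + 1 := hrot _ (by simpa using i.2)
      simp only [Matrix.submatrix_apply, id, hZ, Matrix.of_apply, hic, hr]
      have hxs : xs (i.1 + 1) = -bv (i.1 + 1) := by rw [xs, if_neg (by omega)]
      rw [hxs, W]
    · have hlast : ((finRotate (m + 1)) (Fin.last m)).1 = 0 := by
        rw [finRotate_succ_apply, Fin.last_add_one]
        rfl
      simp only [Matrix.submatrix_apply, id, hZ, Matrix.of_apply, hlast, Fin.val_last]
      rw [xs, if_pos rfl]
      rw [Finset.Ico_self, Finset.prod_empty, one_mul]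
  have h2 : ((-1 : S) ^ m) * ((-1 : S) ^ m) = 1 := by
    rw [← pow_add, Even.neg_one_pow ⟨m, rfl⟩]
  calc Z.det = ((-1 : S) ^ m) * (((-1 : S) ^ m) * Z.det) := by rw [← mul_assoc, h2, one_mul]
    _ = ((-1 : S) ^ m) * (Z.submatrix (finRotate (m + 1)) id).det := by rw [hperm, hsign]
    _ = _ := by rw [hdetL, hdiag]

lemma hA (m : ℕ) :
    (∏ i ∈ Finset.range m, ∏ t ∈ Finset.Ico (i + 1) (m + 1), (-bv (i + 1) + av t)) =
      (-1) ^ (∑ i ∈ Finset.range m, (m - i)) *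
        ∏ i ∈ Finset.Icc 1 m, ∏ j ∈ Finset.Icc i m, (bv i - av j) := by
  have step1 : ∀ i ∈ Finset.range m,
      (∏ t ∈ Finset.Ico (i + 1) (m + 1), (-bv (i + 1) + av t)) =
        (-1) ^ (m - i) * ∏ t ∈ Finset.Ico (i + 1) (m + 1), (bv (i + 1) - av t) := by
    intro i _
    have h : ∀ t, -bv (i + 1) + av t = -(bv (i + 1) - av t) := fun t => by ring
    simp_rw [h]
    rw [prod_neg_eq, Nat.card_Ico]
    congr 2
    omega
  rw [Finset.prod_congr rfl step1, Finset.prod_mul_distrib, Finset.prod_pow_eq_pow_sum]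
  congr 1
  rw [show Finset.Icc 1 m = Finset.Ico 1 (m + 1) from (Finset.Ico_add_one_right_eq_Icc 1 m).symm,
    ← prod_shift m (fun i => ∏ j ∈ Finset.Icc i m, (bv i - av j))]
  refine Finset.prod_congr rfl fun i _ => ?_
  rw [show Finset.Icc (i + 1) m = Finset.Ico (i + 1) (m + 1) from (Finset.Ico_add_one_right_eq_Icc _ m).symm]

lemma hB (m : ℕ) :
    (∏ i ∈ Finset.range m, ∏ t ∈ Finset.Icc 1 i, (-bv (i + 1) + bv t)) =
      ∏ i ∈ Finset.range m, ∏ j ∈ Finset.Ico (i + 1 + 1) (m + 1), (bv (i + 1) - bv j) := by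
  have h : ∀ i t, -bv (i + 1) + bv t = bv t - bv (i + 1) := fun i t => by ring
  simp_rw [h]
  rw [prod_shift m (fun k => ∏ j ∈ Finset.Ico (k + 1) (m + 1), (bv k - bv j)),
    prod_Ico_Ico_comm', ← prod_shift m (fun k => ∏ i ∈ Finset.Ico 1 k, (bv i - bv k))]
  refine Finset.prod_congr rfl fun k _ => ?_
  rw [show Finset.Ico 1 (k + 1) = Finset.Icc 1 k from Finset.Ico_add_one_right_eq_Icc 1 k]

lemma hV (m : ℕ) :
    (Matrix.vandermonde fun i : Fin (m + 1) => xs i.1).det =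
      (∏ i ∈ Finset.range m, ∏ j ∈ Finset.Ico (i + 1 + 1) (m + 1), (bv (i + 1) - bv j)) *
        ((-1) ^ m * ∏ t ∈ Finset.Icc 1 m, (xv 0 + bv t)) := by
  rw [Matrix.det_vandermonde, prod_fin_Ioi (m + 1) (fun i j => xs j - xs i),
    Finset.prod_range_succ']
  congr 1
  · refine Finset.prod_congr rfl fun i _ => Finset.prod_congr rfl fun j hj => ?_
    have hj' := Finset.mem_Ico.mp hj
    rw [xs, if_neg (by omega), xs, if_neg (by omega)]
    ring
  · have h : ∀ j ∈ Finset.Ico 1 (m + 1), xs j - xs 0 = -(xv 0 + bv j) := by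
      intro j hj
      have := Finset.mem_Ico.mp hj
      rw [xs, if_neg (by omega), xs, if_pos rfl]
      ring
    rw [Finset.prod_congr rfl h, prod_neg_eq, Nat.card_Ico,
      show Finset.Ico 1 (m + 1) = Finset.Icc 1 m from Finset.Ico_add_one_right_eq_Icc 1 m]
    congr 2

lemma special (m : ℕ) :
    ((-1 : S) ^ m) * ((∏ i ∈ Finset.range m, W m i) * ∏ t ∈ Finset.Icc 1 m, (xv 0 + bv t)) =
      (Matrix.vandermonde fun i : Fin (m + 1) => xs i.1).det *
        ((-1) ^ (∑ i ∈ Finset.range m, (m - i)) *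
          ∏ i ∈ Finset.Icc 1 m, ∏ j ∈ Finset.Icc i m, (bv i - av j)) := by
  have hw : (∏ i ∈ Finset.range m, W m i) =
      (∏ i ∈ Finset.range m, ∏ t ∈ Finset.Ico (i + 1) (m + 1), (-bv (i + 1) + av t)) *
        ∏ i ∈ Finset.range m, ∏ t ∈ Finset.Icc 1 i, (-bv (i + 1) + bv t) := by
    unfold W
    rw [Finset.prod_mul_distrib]
  rw [hw, hA, hB, hV]
  ring

lemma vand_ne (m : ℕ) : (Matrix.vandermonde fun i : Fin (m + 1) => xs i.1).det ≠ 0 := by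
  rw [Matrix.det_vandermonde]
  refine Finset.prod_ne_zero_iff.mpr fun i _ => Finset.prod_ne_zero_iff.mpr fun j hj => ?_
  have hij : i < j := Finset.mem_Ioi.mp hj
  have hij' : i.1 < j.1 := Fin.lt_def.mp hij
  set e : S →+* ℤ := (MvPolynomial.eval
    (fun v => if v = (Sum.inr (Sum.inr j.1) : ℕ ⊕ ℕ ⊕ ℕ) then (1 : ℤ) else 0)) with he
  intro h
  have hcontra := congrArg e h
  rw [map_zero, map_sub] at hcontra
  have hxj : e (xs j.1) = -1 := by
    rw [xs, if_neg (by omega), map_neg, he, bv]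
    simp
  have hxi : e (xs i.1) = 0 := by
    by_cases hi0 : i.1 = 0
    · rw [hi0, xs, if_pos rfl, he, xv]
      simp
    · rw [xs, if_neg hi0, map_neg, he, bv]
      simp only [MvPolynomial.eval_X]
      rw [if_neg (by simp; omega)]
      ring
  rw [hxj, hxi] at hcontra
  norm_num at hcontra

lemma Cdet_eq (m : ℕ) :
    (Cmat (m + 1)).det = (-1) ^ (∑ i ∈ Finset.range m, (m - i)) *
      ∏ i ∈ Finset.Icc 1 m, ∏ j ∈ Finset.Icc i m, (bv i - av j) := by
  have h1 := key (m + 1) xs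
  rw [detZ, special] at h1
  exact mul_left_cancel₀ (vand_ne m) h1.symm

lemma main (n : ℕ) :
    (Matrix.of fun i j : Fin n =>
      (∏ t ∈ Finset.Ico (j.1 + 1) n, (xv i.1 + av t)) *
        ∏ t ∈ Finset.Icc 1 j.1, (xv i.1 + bv t)).det =
      (∏ i ∈ Finset.range n, ∏ j ∈ Finset.Ico (i + 1) n, (xv i - xv j)) *
        ∏ i ∈ Finset.Icc 1 (n - 1), ∏ j ∈ Finset.Icc i (n - 1), (bv i - av j) := by
  cases n with
  | zero => simp
  | succ m =>
    rw [key (m + 1) xv, Cdet_eq]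
    have hG : (Matrix.vandermonde fun i : Fin (m + 1) => xv i.1).det
        = (-1) ^ (∑ i ∈ Finset.range m, (m - i)) *
            ∏ i ∈ Finset.range (m + 1), ∏ j ∈ Finset.Ico (i + 1) (m + 1), (xv i - xv j) := by
      rw [Matrix.det_vandermonde, prod_fin_Ioi (m + 1) (fun i j => xv j - xv i)]
      have step : ∀ i ∈ Finset.range (m + 1),
          (∏ j ∈ Finset.Ico (i + 1) (m + 1), (xv j - xv i))
            = (-1) ^ (m - i) * ∏ j ∈ Finset.Ico (i + 1) (m + 1), (xv i - xv j) := by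
        intro i _
        have h : ∀ j, xv j - xv i = -(xv i - xv j) := fun j => by ring
        simp_rw [h]
        rw [prod_neg_eq, Nat.card_Ico]
        congr 2
        omega
      rw [Finset.prod_congr rfl step, Finset.prod_mul_distrib, Finset.prod_pow_eq_pow_sum]
      congr 2
      rw [Finset.sum_range_succ]
      simp
    rw [hG]
    have h2 : ((-1 : S) ^ (∑ i ∈ Finset.range m, (m - i))) *
        ((-1 : S) ^ (∑ i ∈ Finset.range m, (m - i))) = 1 := by
      rw [← pow_add, Even.neg_one_pow ⟨_, rfl⟩]
    simp only [Nat.add_sub_cancel]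
    linear_combination ((∏ i ∈ Finset.range (m + 1), ∏ j ∈ Finset.Ico (i + 1) (m + 1),
      (xv i - xv j)) * ∏ i ∈ Finset.Icc 1 m, ∏ j ∈ Finset.Icc i m, (bv i - av j)) * h2

end KrattenthalerAux

theorem krattenthaler_det_lemma {R : Type*} [CommRing R] (n : ℕ)
    (X A B : ℕ → R) :
    Matrix.det (Matrix.of fun i j : Fin n =>
      (∏ t ∈ Finset.Ico (j.1 + 1) n, (X i.1 + A t)) *
        ∏ t ∈ Finset.Icc 1 j.1, (X i.1 + B t)) =
    (∏ i ∈ Finset.range n, ∏ j ∈ Finset.Ico (i + 1) n, (X i - X j)) *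
    ∏ i ∈ Finset.Icc 1 (n - 1), ∏ j ∈ Finset.Icc i (n - 1), (B i - A j) := by
  classical
  set φ : KrattenthalerAux.S →+* R :=
    (MvPolynomial.eval₂Hom (Int.castRingHom R) (Sum.elim X (Sum.elim A B))) with hφ
  have hx : ∀ i, φ (KrattenthalerAux.xv i) = X i := by
    intro i
    simp [hφ, KrattenthalerAux.xv]
  have ha : ∀ t, φ (KrattenthalerAux.av t) = A t := by
    intro t
    simp [hφ, KrattenthalerAux.av]
  have hb : ∀ t, φ (KrattenthalerAux.bv t) = B t := by
    intro t
    simp [hφ, KrattenthalerAux.bv]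
  have hM : (Matrix.of fun i j : Fin n =>
      (∏ t ∈ Finset.Ico (j.1 + 1) n, (X i.1 + A t)) *
        ∏ t ∈ Finset.Icc 1 j.1, (X i.1 + B t)) =
      (Matrix.of fun i j : Fin n =>
        (∏ t ∈ Finset.Ico (j.1 + 1) n, (KrattenthalerAux.xv i.1 + KrattenthalerAux.av t)) *
          ∏ t ∈ Finset.Icc 1 j.1, (KrattenthalerAux.xv i.1 + KrattenthalerAux.bv t)).map φ := by
    refine Matrix.ext fun i j => ?_
    simp [Matrix.map_apply, map_prod, hx, ha, hb]
  rw [hM, ← RingHom.mapMatrix_apply, ← RingHom.map_det, KrattenthalerAux.main]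
  simp [map_prod, hx, ha, hb]
end
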